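/- arXiv:2203.04020 — 8 statements merged into one kernel-verified Lean document; each statement's English description precedes it below -/
import Mathlib

section
/- (Robbins–Siegmund Lemma) Let (Ω, 𝒜, (𝒜_n)_{n∈ℕ}, ℙ) be a filtered probability space. For every n ∈ ℕ, let v_n, ξ_n, ζ_n and t_n be non-negative 𝒜_n-measurable integrable random variables such that Σ_{n∈ℕ} t_n < ∞ and Σ_{n∈ℕ} ζ_n < ∞ almost surely, and for all n ∈ ℕ, E[v_{n+1} | 𝒜_n] ≤ (1 + t_n) v_n + ζ_n − ξ_n almost surely. Then the sequence (v_n)_{n∈ℕ} converges almost surely to a finite non-negative random variable, and Σ_{n∈ℕ} ξ_n < ∞ almost surely. -/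
open MeasureTheory Filter Topology

namespace RobbinsSiegmundAux

variable {Ω : Type*}

/-- The compounding product `∏_{k<n} (1 + t k)`. -/
noncomputable def A (t : ℕ → Ω → ℝ) (n : ℕ) (ω : Ω) : ℝ :=
  ∏ k ∈ Finset.range n, (1 + t k ω)

/-- Weighted partial sums `∑_{k<n} (A (k+1))⁻¹ * f k`. -/
noncomputable def S (t f : ℕ → Ω → ℝ) (n : ℕ) (ω : Ω) : ℝ :=
  ∑ k ∈ Finset.range n, (A t (k + 1) ω)⁻¹ * f k ω

/-- The supermartingale candidate. -/
noncomputable def X (t ξ ζ v : ℕ → Ω → ℝ) (n : ℕ) (ω : Ω) : ℝ :=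
  (A t n ω)⁻¹ * v n ω + (S t ξ n ω - S t ζ n ω)

/-- Indicator that the weighted sum of `ζ` has not yet exceeded `a`. -/
noncomputable def c (t ζ : ℕ → Ω → ℝ) (a : ℕ) (k : ℕ) (ω : Ω) : ℝ :=
  if S t ζ (k + 1) ω ≤ (a : ℝ) then 1 else 0

/-- The stopped process. -/
noncomputable def U (t ξ ζ v : ℕ → Ω → ℝ) (a : ℕ) (n : ℕ) (ω : Ω) : ℝ :=
  X t ξ ζ v 0 ω + ∑ k ∈ Finset.range n, c t ζ a k ω * (X t ξ ζ v (k + 1) ω - X t ξ ζ v k ω)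

variable {t ξ ζ v : ℕ → Ω → ℝ} {ω : Ω} {n : ℕ}

lemma A_zero : A t 0 ω = 1 := by simp [A]

lemma A_succ : A t (n + 1) ω = A t n ω * (1 + t n ω) := Finset.prod_range_succ _ _

lemma one_le_A (ht : ∀ k, 0 ≤ t k ω) : 1 ≤ A t n ω := by
  induction n with
  | zero => simp [A_zero]
  | succ n ih => rw [A_succ]; nlinarith [ht n]

lemma A_pos (ht : ∀ k, 0 ≤ t k ω) : 0 < A t n ω := lt_of_lt_of_le one_pos (one_le_A ht)

lemma A_mono (ht : ∀ k, 0 ≤ t k ω) : Monotone fun n => A t n ω := by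
  apply monotone_nat_of_le_succ
  intro n
  rw [A_succ]
  nlinarith [A_pos (t := t) (n := n) ht, ht n]

lemma S_zero : S t ξ 0 ω = 0 := by simp [S]

lemma S_succ : S t ξ (n + 1) ω = S t ξ n ω + (A t (n + 1) ω)⁻¹ * ξ n ω :=
  Finset.sum_range_succ _ _

lemma S_nonneg (ht : ∀ k, 0 ≤ t k ω) (hξ : ∀ k, 0 ≤ ξ k ω) : 0 ≤ S t ξ n ω :=
  Finset.sum_nonneg fun k _ =>
    mul_nonneg (inv_nonneg.2 (A_pos ht).le) (hξ k)

lemma S_mono (ht : ∀ k, 0 ≤ t k ω) (hξ : ∀ k, 0 ≤ ξ k ω) : Monotone fun n => S t ξ n ω := by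
  apply monotone_nat_of_le_succ
  intro n
  rw [S_succ]
  have := mul_nonneg (inv_nonneg.2 (A_pos (n := n + 1) ht).le) (hξ n)
  linarith

lemma S_le (ht : ∀ k, 0 ≤ t k ω) (hξ : ∀ k, 0 ≤ ξ k ω) :
    S t ξ n ω ≤ ∑ k ∈ Finset.range n, ξ k ω := by
  refine Finset.sum_le_sum fun k _ => ?_
  have h1 : (A t (k + 1) ω)⁻¹ ≤ 1 := inv_le_one_of_one_le₀ (one_le_A ht)
  nlinarith [hξ k, inv_nonneg.2 (A_pos (n := k + 1) (t := t) ht).le]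

lemma neg_S_le_X (ht : ∀ k, 0 ≤ t k ω) (hξ : ∀ k, 0 ≤ ξ k ω) (hv : ∀ k, 0 ≤ v k ω) :
    -(S t ζ n ω) ≤ X t ξ ζ v n ω := by
  have h1 : 0 ≤ (A t n ω)⁻¹ * v n ω := mul_nonneg (inv_nonneg.2 (A_pos ht).le) (hv n)
  have h2 : 0 ≤ S t ξ n ω := S_nonneg ht hξ
  simp only [X]; linarith

lemma U_zero {a : ℕ} : U t ξ ζ v a 0 ω = X t ξ ζ v 0 ω := by simp [U]

lemma U_succ {a : ℕ} :
    U t ξ ζ v a (n + 1) ω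
      = U t ξ ζ v a n ω + c t ζ a n ω * (X t ξ ζ v (n + 1) ω - X t ξ ζ v n ω) := by
  simp [U, Finset.sum_range_succ, add_assoc]

/-- Invariant: the stopped process is bounded below by `-a` and agrees with `X`
as long as the weighted `ζ`-sum stays below `a`. -/
lemma U_invariant {a : ℕ} (ht : ∀ k, 0 ≤ t k ω) (hξ : ∀ k, 0 ≤ ξ k ω)
    (hζ : ∀ k, 0 ≤ ζ k ω) (hv : ∀ k, 0 ≤ v k ω) :
    ∀ n, -(a : ℝ) ≤ U t ξ ζ v a n ω ∧
      (S t ζ (n + 1) ω ≤ (a : ℝ) → U t ξ ζ v a n ω = X t ξ ζ v n ω) := by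
  intro n
  induction n with
  | zero =>
    constructor
    · rw [U_zero]
      have h0 : -(S t ζ 0 ω) ≤ X t ξ ζ v 0 ω := neg_S_le_X ht hξ hv
      rw [S_zero] at h0
      have : (0:ℝ) ≤ a := Nat.cast_nonneg a
      linarith
    · intro _; exact U_zero
  | succ n ih =>
    by_cases h : S t ζ (n + 1) ω ≤ (a : ℝ)
    · have hc : c t ζ a n ω = 1 := if_pos h
      have heq : U t ξ ζ v a (n + 1) ω = X t ξ ζ v (n + 1) ω := by
        rw [U_succ, hc, ih.2 h]; ring
      constructor
      · rw [heq]
        have h1 : -(S t ζ (n + 1) ω) ≤ X t ξ ζ v (n + 1) ω := neg_S_le_X ht hξ hv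
        linarith
      · intro _; exact heq
    · have hc : c t ζ a n ω = 0 := if_neg h
      have heq : U t ξ ζ v a (n + 1) ω = U t ξ ζ v a n ω := by rw [U_succ, hc]; ring
      constructor
      · rw [heq]; exact ih.1
      · intro h2
        exfalso
        have hmono : S t ζ (n + 1) ω ≤ S t ζ (n + 2) ω :=
          S_mono ht hζ (Nat.le_succ _)
        linarith

end RobbinsSiegmundAux

open RobbinsSiegmundAux in
/-- **Robbins–Siegmund Lemma.** On a filtered probability space, if `v, ξ, ζ, t` are
non-negative adapted integrable processes with `∑ t n < ∞` and `∑ ζ n < ∞` almost surely,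
and `E[v (n+1) | 𝒜 n] ≤ (1 + t n) * v n + ζ n - ξ n` almost surely for every `n`, then
almost surely `v n` converges to a finite non-negative limit and `∑ ξ n < ∞`. -/
theorem robbins_siegmund
    {Ω : Type*} {m0 : MeasurableSpace Ω} {μ : Measure Ω} [IsProbabilityMeasure μ]
    (𝒜 : Filtration ℕ m0)
    (v ξ ζ t : ℕ → Ω → ℝ)
    (hv_nonneg : ∀ n ω, 0 ≤ v n ω) (hξ_nonneg : ∀ n ω, 0 ≤ ξ n ω)
    (hζ_nonneg : ∀ n ω, 0 ≤ ζ n ω) (ht_nonneg : ∀ n ω, 0 ≤ t n ω)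
    (hv_meas : ∀ n, StronglyMeasurable[𝒜 n] (v n))
    (hξ_meas : ∀ n, StronglyMeasurable[𝒜 n] (ξ n))
    (hζ_meas : ∀ n, StronglyMeasurable[𝒜 n] (ζ n))
    (ht_meas : ∀ n, StronglyMeasurable[𝒜 n] (t n))
    (hv_int : ∀ n, Integrable (v n) μ) (hξ_int : ∀ n, Integrable (ξ n) μ)
    (hζ_int : ∀ n, Integrable (ζ n) μ) (ht_int : ∀ n, Integrable (t n) μ)
    (ht_sum : ∀ᵐ ω ∂μ, Summable fun n => t n ω)
    (hζ_sum : ∀ᵐ ω ∂μ, Summable fun n => ζ n ω)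
    (hrec : ∀ n, ∀ᵐ ω ∂μ,
      (μ[v (n + 1) | 𝒜 n]) ω ≤ (1 + t n ω) * v n ω + ζ n ω - ξ n ω) :
    ∀ᵐ ω ∂μ,
      (∃ l : ℝ, 0 ≤ l ∧ Tendsto (fun n => v n ω) atTop (𝓝 l)) ∧
      Summable fun n => ξ n ω := by
  -- Measurability of `A`
  have hA_meas : ∀ m n : ℕ, m ≤ n + 1 → StronglyMeasurable[𝒜 n] (A t m) := by
    intro m n h
    apply Finset.stronglyMeasurable_fun_prod
    intro k hk
    have hk' : k ≤ n := by
      have := Finset.mem_range.1 hk; omega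
    exact stronglyMeasurable_const.add ((ht_meas k).mono (𝒜.mono hk'))
  have ht_nn : ∀ ω k, 0 ≤ t k ω := fun ω k => ht_nonneg k ω
  have hA_pos : ∀ n ω, 0 < A t n ω := fun n ω => A_pos (ht_nn ω)
  have hAinv_le_one : ∀ n ω, (A t n ω)⁻¹ ≤ 1 :=
    fun n ω => inv_le_one_of_one_le₀ (one_le_A (ht_nn ω))
  -- Measurability of `S`
  have hS_meas : ∀ (f : ℕ → Ω → ℝ), (∀ n, StronglyMeasurable[𝒜 n] (f n)) →
      ∀ m n : ℕ, m ≤ n + 1 → StronglyMeasurable[𝒜 n] (S t f m) := by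
    intro f hf m n h
    apply Finset.stronglyMeasurable_fun_sum
    intro k hk
    have hk' : k < m := Finset.mem_range.1 hk
    exact ((hA_meas (k + 1) n (by omega)).measurable.inv.stronglyMeasurable).mul ((hf k).mono (𝒜.mono (by omega)))
  have hX_meas : ∀ n, StronglyMeasurable[𝒜 n] (X t ξ ζ v n) := by
    intro n
    exact (((hA_meas n n (by omega)).measurable.inv.stronglyMeasurable).mul (hv_meas n)).add
      ((hS_meas ξ hξ_meas n n (by omega)).sub (hS_meas ζ hζ_meas n n (by omega)))
  have hc_meas : ∀ a n : ℕ, StronglyMeasurable[𝒜 n] (c t ζ a n) := by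
    intro a n
    have hZ : StronglyMeasurable[𝒜 n] (S t ζ (n + 1)) := hS_meas ζ hζ_meas (n + 1) n le_rfl
    have hset : MeasurableSet[𝒜 n] {ω | S t ζ (n + 1) ω ≤ (a : ℝ)} :=
      measurableSet_le hZ.measurable measurable_const
    exact (stronglyMeasurable_const.ite hset stronglyMeasurable_const)
  have hc_bound : ∀ a n ω, 0 ≤ c t ζ a n ω ∧ c t ζ a n ω ≤ 1 := by
    intro a n ω
    unfold c
    split <;> norm_num
  have hU_meas : ∀ a n : ℕ, StronglyMeasurable[𝒜 n] (U t ξ ζ v a n) := by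
    intro a n
    apply ((hX_meas 0).mono (𝒜.mono (Nat.zero_le n))).add
    apply Finset.stronglyMeasurable_fun_sum
    intro k hk
    have hk' : k < n := Finset.mem_range.1 hk
    exact ((hc_meas a k).mono (𝒜.mono hk'.le)).mul
      (((hX_meas (k + 1)).mono (𝒜.mono hk')).sub ((hX_meas k).mono (𝒜.mono hk'.le)))
  -- Integrability
  have hAv_int : ∀ n, Integrable (fun ω => (A t n ω)⁻¹ * v n ω) μ := by
    intro n
    refine (hv_int n).mono
      ((((hA_meas n n (by omega)).measurable.inv.stronglyMeasurable).mul (hv_meas n)).mono (𝒜.le n)).aestronglyMeasurable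
      (ae_of_all _ fun ω => ?_)
    rw [Real.norm_eq_abs, Real.norm_eq_abs, abs_of_nonneg (hv_nonneg n ω),
      abs_of_nonneg (mul_nonneg (inv_nonneg.2 (hA_pos n ω).le) (hv_nonneg n ω))]
    nlinarith [hAinv_le_one n ω, hv_nonneg n ω, inv_nonneg.2 (hA_pos n ω).le]
  have hS_int : ∀ (f : ℕ → Ω → ℝ), (∀ n ω, 0 ≤ f n ω) → (∀ n, StronglyMeasurable[𝒜 n] (f n)) →
      (∀ n, Integrable (f n) μ) → ∀ n, Integrable (S t f n) μ := by
    intro f hfnn hfm hfi n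
    unfold S
    apply integrable_finset_sum
    intro k hk
    refine (hfi k).mono
      ((((hA_meas (k+1) (k+1) (by omega)).measurable.inv.stronglyMeasurable).mul ((hfm k).mono (𝒜.mono k.le_succ))).mono
        (𝒜.le (k+1))).aestronglyMeasurable (ae_of_all _ fun ω => ?_)
    rw [Real.norm_eq_abs, Real.norm_eq_abs, abs_of_nonneg (hfnn k ω),
      abs_of_nonneg (mul_nonneg (inv_nonneg.2 (hA_pos (k+1) ω).le) (hfnn k ω))]
    nlinarith [hAinv_le_one (k+1) ω, hfnn k ω, inv_nonneg.2 (hA_pos (k+1) ω).le]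
  have hSξ_int : ∀ n, Integrable (S t ξ n) μ :=
    hS_int ξ (fun n ω => hξ_nonneg n ω) hξ_meas hξ_int
  have hSζ_int : ∀ n, Integrable (S t ζ n) μ :=
    hS_int ζ (fun n ω => hζ_nonneg n ω) hζ_meas hζ_int
  have hX_int : ∀ n, Integrable (X t ξ ζ v n) μ := by
    intro n
    exact (hAv_int n).add ((hSξ_int n).sub (hSζ_int n))
  have hU_int : ∀ a n, Integrable (U t ξ ζ v a n) μ := by
    intro a n
    apply (hX_int 0).add
    apply integrable_finset_sum
    intro k hk
    refine Integrable.bdd_mul (((hX_int (k+1)).sub (hX_int k)))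
      (((hc_meas a k).mono (𝒜.le k)).aestronglyMeasurable) (c := 1) (ae_of_all _ fun ω => ?_)
    rw [Real.norm_eq_abs, abs_of_nonneg (hc_bound a k ω).1]
    exact (hc_bound a k ω).2
  -- the key supermartingale inequality
  have hXcond : ∀ n, μ[X t ξ ζ v (n + 1) | 𝒜 n] ≤ᵐ[μ] X t ξ ζ v n := by
    intro n
    have hf₁int := hAv_int (n + 1)
    have hf₂int : Integrable (fun ω => S t ξ (n + 1) ω - S t ζ (n + 1) ω) μ :=
      (hSξ_int (n + 1)).sub (hSζ_int (n + 1))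
    have hXsplit : X t ξ ζ v (n + 1)
        = (fun ω => (A t (n + 1) ω)⁻¹ * v (n + 1) ω)
          + fun ω => S t ξ (n + 1) ω - S t ζ (n + 1) ω := rfl
    have hadd : μ[X t ξ ζ v (n + 1)|𝒜 n]
        =ᵐ[μ] μ[fun ω => (A t (n + 1) ω)⁻¹ * v (n + 1) ω|𝒜 n]
          + μ[fun ω => S t ξ (n + 1) ω - S t ζ (n + 1) ω|𝒜 n] := by
      rw [hXsplit]; exact condExp_add hf₁int hf₂int _
    have hmul : μ[fun ω => (A t (n + 1) ω)⁻¹ * v (n + 1) ω|𝒜 n]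
        =ᵐ[μ] fun ω => (A t (n + 1) ω)⁻¹ * (μ[v (n + 1)|𝒜 n]) ω :=
      condExp_mul_of_stronglyMeasurable_left
        ((hA_meas (n + 1) n le_rfl).measurable.inv.stronglyMeasurable) hf₁int (hv_int (n + 1))
    have hSZ : μ[fun ω => S t ξ (n + 1) ω - S t ζ (n + 1) ω|𝒜 n]
        = fun ω => S t ξ (n + 1) ω - S t ζ (n + 1) ω :=
      condExp_of_stronglyMeasurable (𝒜.le n)
        ((hS_meas ξ hξ_meas (n + 1) n le_rfl).sub (hS_meas ζ hζ_meas (n + 1) n le_rfl)) hf₂int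
    filter_upwards [hadd, hmul, hrec n] with ω h1 h2 h3
    rw [h1, Pi.add_apply, h2, hSZ]
    have hAinv_nn : (0:ℝ) ≤ (A t (n + 1) ω)⁻¹ := inv_nonneg.2 (hA_pos (n + 1) ω).le
    have step := mul_le_mul_of_nonneg_left h3 hAinv_nn
    have key : (A t (n + 1) ω)⁻¹ * ((1 + t n ω) * v n ω + ζ n ω - ξ n ω)
        + (S t ξ (n + 1) ω - S t ζ (n + 1) ω) = X t ξ ζ v n ω := by
      have hAne : A t n ω ≠ 0 := (hA_pos n ω).ne'
      have htpos : (0:ℝ) < 1 + t n ω := by linarith [ht_nonneg n ω]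
      rw [X, S_succ, S_succ, A_succ]
      field_simp
      ring
    linarith
  -- supermartingale property of the stopped process
  have hUsuper : ∀ a : ℕ, Supermartingale (U t ξ ζ v a) 𝒜 μ := by
    intro a
    refine supermartingale_nat (fun n => hU_meas a n) (fun n => hU_int a n) ?_
    intro n
    have hcX_int : ∀ m, Integrable (fun ω => c t ζ a n ω * X t ξ ζ v m ω) μ := by
      intro m
      refine Integrable.bdd_mul (hX_int m)
        (((hc_meas a n).mono (𝒜.le n)).aestronglyMeasurable) (c := 1) (ae_of_all _ fun ω => ?_)
      rw [Real.norm_eq_abs, abs_of_nonneg (hc_bound a n ω).1]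
      exact (hc_bound a n ω).2
    have h1int : Integrable (fun ω => U t ξ ζ v a n ω - c t ζ a n ω * X t ξ ζ v n ω) μ :=
      (hU_int a n).sub (hcX_int n)
    have hUsplit : U t ξ ζ v a (n + 1)
        = (fun ω => U t ξ ζ v a n ω - c t ζ a n ω * X t ξ ζ v n ω)
          + fun ω => c t ζ a n ω * X t ξ ζ v (n + 1) ω := by
      funext ω
      rw [Pi.add_apply, U_succ]
      ring
    have hadd : μ[U t ξ ζ v a (n + 1)|𝒜 n]
        =ᵐ[μ] μ[fun ω => U t ξ ζ v a n ω - c t ζ a n ω * X t ξ ζ v n ω|𝒜 n]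
          + μ[fun ω => c t ζ a n ω * X t ξ ζ v (n + 1) ω|𝒜 n] := by
      rw [hUsplit]; exact condExp_add h1int (hcX_int (n + 1)) _
    have h1 : μ[fun ω => U t ξ ζ v a n ω - c t ζ a n ω * X t ξ ζ v n ω|𝒜 n]
        = fun ω => U t ξ ζ v a n ω - c t ζ a n ω * X t ξ ζ v n ω :=
      condExp_of_stronglyMeasurable (𝒜.le n)
        ((hU_meas a n).sub ((hc_meas a n).mul (hX_meas n))) h1int
    have hmul : μ[fun ω => c t ζ a n ω * X t ξ ζ v (n + 1) ω|𝒜 n]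
        =ᵐ[μ] fun ω => c t ζ a n ω * (μ[X t ξ ζ v (n + 1)|𝒜 n]) ω :=
      condExp_mul_of_stronglyMeasurable_left (hc_meas a n) (hcX_int (n + 1)) (hX_int (n + 1))
    filter_upwards [hadd, hmul, hXcond n] with ω e1 e2 e3
    rw [e1, Pi.add_apply, h1, e2]
    have := mul_le_mul_of_nonneg_left e3 (hc_bound a n ω).1
    dsimp only
    linarith
  -- almost-sure convergence of the stopped processes
  have hUlb : ∀ (a : ℕ) n ω, -(a : ℝ) ≤ U t ξ ζ v a n ω := fun a n ω =>
    (U_invariant (ht_nn ω) (fun k => hξ_nonneg k ω) (fun k => hζ_nonneg k ω)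
      (fun k => hv_nonneg k ω) n).1
  have hUconv : ∀ a : ℕ, ∀ᵐ ω ∂μ, ∃ l, Tendsto (fun n => U t ξ ζ v a n ω) atTop (𝓝 l) := by
    intro a
    have hU0 : U t ξ ζ v a 0 = X t ξ ζ v 0 := funext fun ω => U_zero
    have hmean : ∀ n, ∫ ω, U t ξ ζ v a n ω ∂μ ≤ ∫ ω, X t ξ ζ v 0 ω ∂μ := by
      intro n
      have := (hUsuper a).setIntegral_le (Nat.zero_le n) (MeasurableSet.univ (α := Ω))
      rw [setIntegral_univ, setIntegral_univ, hU0] at this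
      exact this
    have hbdd : ∀ n, eLpNorm (U t ξ ζ v a n) 1 μ
        ≤ ENNReal.ofReal (∫ ω, X t ξ ζ v 0 ω ∂μ + 2 * a) := by
      intro n
      rw [eLpNorm_one_eq_lintegral_enorm,
        ← ofReal_integral_norm_eq_lintegral_enorm (hU_int a n)]
      apply ENNReal.ofReal_le_ofReal
      have habs : ∀ ω, ‖U t ξ ζ v a n ω‖ ≤ U t ξ ζ v a n ω + 2 * a := by
        intro ω
        have h1 := hUlb a n ω
        have h2 : (0:ℝ) ≤ a := Nat.cast_nonneg a
        rw [Real.norm_eq_abs, abs_le]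
        constructor <;> linarith
      calc ∫ ω, ‖U t ξ ζ v a n ω‖ ∂μ
          ≤ ∫ ω, (U t ξ ζ v a n ω + 2 * a) ∂μ :=
            integral_mono (hU_int a n).norm ((hU_int a n).add (integrable_const _))
              habs
        _ = ∫ ω, U t ξ ζ v a n ω ∂μ + 2 * a := by
            rw [integral_add (hU_int a n) (integrable_const _), integral_const]
            simp
        _ ≤ ∫ ω, X t ξ ζ v 0 ω ∂μ + 2 * a := by linarith [hmean n]
    have hneg := (hUsuper a).neg.exists_ae_tendsto_of_bdd
      (R := (ENNReal.ofReal (∫ ω, X t ξ ζ v 0 ω ∂μ + 2 * a)).toNNReal) ?_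
    · filter_upwards [hneg] with ω ⟨l, hl⟩
      exact ⟨-l, by simpa using hl.neg⟩
    · intro n
      rw [show (-(U t ξ ζ v a)) n = -(U t ξ ζ v a n) from rfl, eLpNorm_neg]
      refine le_trans (hbdd n) ?_
      rw [ENNReal.coe_toNNReal]
      exact ENNReal.ofReal_ne_top
  -- pointwise conclusion
  have hUae : ∀ᵐ ω ∂μ, ∀ a : ℕ, ∃ l, Tendsto (fun n => U t ξ ζ v a n ω) atTop (𝓝 l) :=
    (ae_all_iff).2 hUconv
  filter_upwards [ht_sum, hζ_sum, hUae] with ω hts hzs hUc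
  have htn : ∀ k, 0 ≤ t k ω := ht_nn ω
  have hξn : ∀ k, 0 ≤ ξ k ω := fun k => hξ_nonneg k ω
  have hζn : ∀ k, 0 ≤ ζ k ω := fun k => hζ_nonneg k ω
  have hvn : ∀ k, 0 ≤ v k ω := fun k => hv_nonneg k ω
  set C : ℝ := Real.exp (∑' k, t k ω) with hC
  have hA_le : ∀ n, A t n ω ≤ C := by
    intro n
    calc A t n ω ≤ ∏ k ∈ Finset.range n, Real.exp (t k ω) := by
          unfold A
          refine Finset.prod_le_prod (fun k _ => by linarith [htn k]) fun k _ => ?_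
          have := Real.add_one_le_exp (t k ω)
          linarith
      _ = Real.exp (∑ k ∈ Finset.range n, t k ω) := (Real.exp_sum _ _).symm
      _ ≤ C := Real.exp_le_exp.2 (hts.sum_le_tsum _ (fun i _ => htn i))
  have hAmono : Monotone fun n => A t n ω := A_mono htn
  have hAten : Tendsto (fun n => A t n ω) atTop (𝓝 (⨆ n, A t n ω)) :=
    tendsto_atTop_ciSup hAmono ⟨C, by rintro x ⟨n, rfl⟩; exact hA_le n⟩
  -- the threshold
  set B : ℝ := ∑' k, ζ k ω with hB
  have hZle : ∀ n, S t ζ n ω ≤ B := fun n =>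
    (S_le htn hζn).trans (hzs.sum_le_tsum _ (fun i _ => hζn i))
  set a : ℕ := ⌈B⌉₊ with ha
  have hZa : ∀ n, S t ζ (n + 1) ω ≤ (a : ℝ) := fun n => (hZle _).trans (Nat.le_ceil B)
  have hUX : ∀ n, U t ξ ζ v a n ω = X t ξ ζ v n ω := fun n =>
    (U_invariant htn hξn hζn hvn n).2 (hZa n)
  obtain ⟨LX, hLX⟩ := hUc a
  have hXten : Tendsto (fun n => X t ξ ζ v n ω) atTop (𝓝 LX) := hLX.congr hUX
  -- weighted sums converge
  have hZsum : Summable fun k => (A t (k + 1) ω)⁻¹ * ζ k ω := by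
    refine Summable.of_nonneg_of_le
      (fun k => mul_nonneg (inv_nonneg.2 (hA_pos (k + 1) ω).le) (hζn k)) (fun k => ?_) hzs
    nlinarith [hAinv_le_one (k + 1) ω, hζn k, inv_nonneg.2 (hA_pos (k + 1) ω).le]
  have hZten : Tendsto (fun n => S t ζ n ω) atTop (𝓝 (∑' k, (A t (k + 1) ω)⁻¹ * ζ k ω)) :=
    hZsum.hasSum.tendsto_sum_nat
  have hWten : Tendsto (fun n => X t ξ ζ v n ω + S t ζ n ω) atTop
      (𝓝 (LX + ∑' k, (A t (k + 1) ω)⁻¹ * ζ k ω)) := hXten.add hZten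
  obtain ⟨cb, hcb⟩ := hWten.bddAbove_range
  have hSle : ∀ n, S t ξ n ω ≤ cb := by
    intro n
    have h1 : S t ξ n ω ≤ X t ξ ζ v n ω + S t ζ n ω := by
      have := mul_nonneg (inv_nonneg.2 (hA_pos n ω).le) (hvn n)
      rw [X]; linarith
    exact h1.trans (hcb ⟨n, rfl⟩)
  have hSξsum : Summable fun k => (A t (k + 1) ω)⁻¹ * ξ k ω := by
    refine summable_of_sum_range_le (c := cb)
      (fun k => mul_nonneg (inv_nonneg.2 (hA_pos (k + 1) ω).le) (hξn k)) fun n => ?_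
    exact hSle n
  -- summability of ξ
  have hξsum : Summable fun k => ξ k ω := by
    refine Summable.of_nonneg_of_le hξn (fun k => ?_) (hSξsum.mul_left C)
    have hAk := hA_le (k + 1)
    have hid : A t (k + 1) ω * ((A t (k + 1) ω)⁻¹ * ξ k ω) = ξ k ω := by
      have hne : A t (k + 1) ω ≠ 0 := (hA_pos (k + 1) ω).ne'
      field_simp
    nlinarith [mul_nonneg (inv_nonneg.2 (hA_pos (k + 1) ω).le) (hξn k)]
  have hSξten : Tendsto (fun n => S t ξ n ω) atTop
      (𝓝 (∑' k, (A t (k + 1) ω)⁻¹ * ξ k ω)) := hSξsum.hasSum.tendsto_sum_nat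
  -- convergence of the weighted value process
  have hwten : Tendsto (fun n => (A t n ω)⁻¹ * v n ω) atTop
      (𝓝 (LX + (∑' k, (A t (k + 1) ω)⁻¹ * ζ k ω) - ∑' k, (A t (k + 1) ω)⁻¹ * ξ k ω)) := by
    refine (hWten.sub hSξten).congr fun n => ?_
    rw [X]; ring
  have hvten : Tendsto (fun n => v n ω) atTop
      (𝓝 ((⨆ n, A t n ω) *
        (LX + (∑' k, (A t (k + 1) ω)⁻¹ * ζ k ω) - ∑' k, (A t (k + 1) ω)⁻¹ * ξ k ω))) := by
    refine (hAten.mul hwten).congr fun n => ?_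
    have hne : A t n ω ≠ 0 := (hA_pos n ω).ne'
    field_simp
  refine ⟨⟨_, ?_, hvten⟩, hξsum⟩
  exact ge_of_tendsto hvten (Eventually.of_forall fun n => hvn n)
end

section
/- (Three-point inequality for Lipschitz gradients) Let H be a finite-dimensional real inner product space, Q a self-adjoint positive definite operator on H, and β > 0. Let f: H → ℝ be convex and continuously differentiable with ‖∇f(x) − ∇f(y)‖_{Q⁻¹} ≤ β ‖x − y‖_Q for all x, y ∈ H. Then for all x, x', x'' ∈ H: ⟨∇f(x) − ∇f(x'), x'' − x⟩ ≤ (β/4) ‖x'' − x'‖²_Q. -/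
open scoped RealInnerProductSpace

/-- **Three-point inequality for weighted-Lipschitz gradients.**
If `f : H → ℝ` is convex and `C¹` with `‖∇f x − ∇f y‖_{Q⁻¹} ≤ β ‖x − y‖_Q` for a
self-adjoint positive definite `Q`, then for all `x, x', x''`,
`⟨∇f x − ∇f x', x'' − x⟩ ≤ (β/4) ‖x'' − x'‖²_Q`. -/
theorem three_point_inequality
    {H : Type*} [NormedAddCommGroup H] [InnerProductSpace ℝ H] [FiniteDimensional ℝ H]
    (Q Qinv : H →ₗ[ℝ] H)
    (hQ_sa : ∀ x y : H, ⟪Q x, y⟫ = ⟪x, Q y⟫)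
    (hQ_pd : ∀ x : H, x ≠ 0 → 0 < ⟪Q x, x⟫)
    (hQinv_sa : ∀ x y : H, ⟪Qinv x, y⟫ = ⟪x, Qinv y⟫)
    (hQinv_pd : ∀ x : H, x ≠ 0 → 0 < ⟪Qinv x, x⟫)
    (hQQinv : ∀ x : H, Q (Qinv x) = x) (hQinvQ : ∀ x : H, Qinv (Q x) = x)
    (β : ℝ) (hβ : 0 < β)
    (f : H → ℝ) (hf_cvx : ConvexOn ℝ Set.univ f) (hf_smooth : ContDiff ℝ 1 f)
    (hf_lip : ∀ x y : H,
      Real.sqrt ⟪Qinv (gradient f x - gradient f y), gradient f x - gradient f y⟫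
        ≤ β * Real.sqrt ⟪Q (x - y), x - y⟫) :
    ∀ x x' x'' : H,
      ⟪gradient f x - gradient f x', x'' - x⟫ ≤ β / 4 * ⟪Q (x'' - x'), x'' - x'⟫ := by
  have hdiff : ∀ z : H, DifferentiableAt ℝ f z := fun z =>
    (hf_smooth.differentiable one_ne_zero).differentiableAt
  have hgrad : ∀ z : H, HasGradientAt f (gradient f z) z := fun z =>
    (hdiff z).hasGradientAt
  have hgcont : Continuous (gradient f) :=
    (InnerProductSpace.toDual ℝ H).symm.continuous.comp
      (hf_smooth.continuous_fderiv one_ne_zero)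
  have hQ0 : ∀ v : H, 0 ≤ ⟪Q v, v⟫ := by
    intro v
    by_cases h : v = 0
    · simp [h]
    · exact (hQ_pd v h).le
  have hQinv0 : ∀ v : H, 0 ≤ ⟪Qinv v, v⟫ := by
    intro v
    by_cases h : v = 0
    · simp [h]
    · exact (hQinv_pd v h).le
  have hsymQ : ∀ a b : H, ⟪Q a, b⟫ = ⟪Q b, a⟫ := fun a b => by
    rw [hQ_sa a b, real_inner_comm]
  -- Cauchy–Schwarz for the Q-form
  have hCSQ : ∀ a b : H, ⟪Q a, b⟫ ≤ Real.sqrt ⟪Q a, a⟫ * Real.sqrt ⟪Q b, b⟫ := by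
    intro a b
    have hquad : ∀ t : ℝ, 0 ≤ ⟪Q b, b⟫ * (t * t) + (2 * ⟪Q a, b⟫) * t + ⟪Q a, a⟫ := by
      intro t
      have h0 := hQ0 (a + t • b)
      have hexp : ⟪Q (a + t • b), a + t • b⟫
          = ⟪Q b, b⟫ * (t * t) + (2 * ⟪Q a, b⟫) * t + ⟪Q a, a⟫ := by
        have hba : ⟪Q b, a⟫ = ⟪Q a, b⟫ := hsymQ b a
        simp only [map_add, map_smul, inner_add_left, inner_add_right,
          real_inner_smul_left, real_inner_smul_right, hba]
        ring
      rw [hexp] at h0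
      exact h0
    have hdisc := discrim_le_zero hquad
    rw [discrim] at hdisc
    have hsq : ⟪Q a, b⟫ ^ 2 ≤ ⟪Q a, a⟫ * ⟪Q b, b⟫ := by nlinarith [hdisc]
    calc ⟪Q a, b⟫ ≤ |⟪Q a, b⟫| := le_abs_self _
      _ = Real.sqrt (⟪Q a, b⟫ ^ 2) := (Real.sqrt_sq_eq_abs _).symm
      _ ≤ Real.sqrt (⟪Q a, a⟫ * ⟪Q b, b⟫) := Real.sqrt_le_sqrt hsq
      _ = Real.sqrt ⟪Q a, a⟫ * Real.sqrt ⟪Q b, b⟫ := Real.sqrt_mul (hQ0 a) _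
  -- mixed Cauchy–Schwarz
  have hCS : ∀ u v : H, ⟪u, v⟫ ≤ Real.sqrt ⟪Qinv u, u⟫ * Real.sqrt ⟪Q v, v⟫ := by
    intro u v
    have h2 : ⟪Q (Qinv u), Qinv u⟫ = ⟪Qinv u, u⟫ := by
      rw [hQQinv, real_inner_comm]
    have h := hCSQ (Qinv u) v
    rw [h2] at h
    rw [hQQinv] at h
    exact h
  -- derivative along a line
  have hline : ∀ (a v : H) (t : ℝ),
      HasDerivAt (fun s : ℝ => f (a + s • v)) ⟪gradient f (a + t • v), v⟫ t := by
    intro a v t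
    have hl : HasDerivAt (fun s : ℝ => a + s • v) v t := by
      simpa using ((hasDerivAt_id t).smul_const v).const_add a
    have h := (hgrad (a + t • v)).hasFDerivAt.comp_hasDerivAt t hl
    simpa only [InnerProductSpace.toDual_apply_apply, Function.comp_def] using h
  -- descent lemma
  have descent : ∀ a b : H,
      f b ≤ f a + ⟪gradient f a, b - a⟫ + β / 2 * ⟪Q (b - a), b - a⟫ := by
    intro a b
    set v := b - a with hv
    have hcont1 : Continuous fun t : ℝ => ⟪gradient f (a + t • v), v⟫ :=
      Continuous.inner
        (hgcont.comp (continuous_const.add (continuous_id.smul continuous_const)))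
        continuous_const
    have hFTC : ∫ t in (0:ℝ)..1, ⟪gradient f (a + t • v), v⟫ = f b - f a := by
      have h := intervalIntegral.integral_eq_sub_of_hasDerivAt
        (f := fun s : ℝ => f (a + s • v))
        (f' := fun t => ⟪gradient f (a + t • v), v⟫)
        (fun t _ => hline a v t) (hcont1.intervalIntegrable 0 1)
      rw [h]
      simp [hv]
    have hbound : ∀ t ∈ Set.Icc (0:ℝ) 1,
        ⟪gradient f (a + t • v), v⟫ ≤ ⟪gradient f a, v⟫ + β * t * ⟪Q v, v⟫ := by
      intro t ht
      have hcs := hCS (gradient f (a + t • v) - gradient f a) v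
      have hlip' := hf_lip (a + t • v) a
      have hav : a + t • v - a = t • v := by abel
      rw [hav] at hlip'
      have hQt : ⟪Q (t • v), t • v⟫ = t ^ 2 * ⟪Q v, v⟫ := by
        simp only [map_smul, real_inner_smul_left, real_inner_smul_right]
        ring
      have hsqrt : Real.sqrt (t ^ 2 * ⟪Q v, v⟫) = t * Real.sqrt ⟪Q v, v⟫ := by
        rw [Real.sqrt_mul (sq_nonneg t), Real.sqrt_sq ht.1]
      rw [hQt, hsqrt] at hlip'
      have hss : Real.sqrt ⟪Q v, v⟫ * Real.sqrt ⟪Q v, v⟫ = ⟪Q v, v⟫ :=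
        Real.mul_self_sqrt (hQ0 v)
      have h1 : ⟪gradient f (a + t • v) - gradient f a, v⟫ ≤ β * t * ⟪Q v, v⟫ := by
        calc ⟪gradient f (a + t • v) - gradient f a, v⟫
            ≤ Real.sqrt ⟪Qinv (gradient f (a + t • v) - gradient f a),
                gradient f (a + t • v) - gradient f a⟫ * Real.sqrt ⟪Q v, v⟫ := hcs
          _ ≤ (β * (t * Real.sqrt ⟪Q v, v⟫)) * Real.sqrt ⟪Q v, v⟫ :=
              mul_le_mul_of_nonneg_right hlip' (Real.sqrt_nonneg _)
          _ = β * t * ⟪Q v, v⟫ := by linear_combination (β * t) * hss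
      rw [inner_sub_left] at h1
      linarith
    have hcont2 : Continuous fun t : ℝ => ⟪gradient f a, v⟫ + β * t * ⟪Q v, v⟫ :=
      continuous_const.add ((continuous_const.mul continuous_id).mul continuous_const)
    have hmono := intervalIntegral.integral_mono_on (μ := MeasureTheory.volume)
      (zero_le_one) (hcont1.intervalIntegrable 0 1) (hcont2.intervalIntegrable 0 1) hbound
    have hint2 : ∫ t in (0:ℝ)..1, (⟪gradient f a, v⟫ + β * t * ⟪Q v, v⟫)
        = ⟪gradient f a, v⟫ + β / 2 * ⟪Q v, v⟫ := by
      have h := intervalIntegral.integral_eq_sub_of_hasDerivAt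
        (f := fun t : ℝ => ⟪gradient f a, v⟫ * t + β * t ^ 2 / 2 * ⟪Q v, v⟫)
        (f' := fun t : ℝ => ⟪gradient f a, v⟫ + β * t * ⟪Q v, v⟫)
        (fun t _ => by
          have h1 : HasDerivAt (fun t : ℝ => ⟪gradient f a, v⟫ * t)
              ⟪gradient f a, v⟫ t := by
            simpa using (hasDerivAt_id t).const_mul ⟪gradient f a, v⟫
          have h2 : HasDerivAt (fun t : ℝ => β * t ^ 2 / 2 * ⟪Q v, v⟫)
              (β * t * ⟪Q v, v⟫) t := by
            have h3 := (((hasDerivAt_pow 2 t).const_mul β).div_const 2).mul_const ⟪Q v, v⟫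
            refine h3.congr_deriv ?_
            push_cast
            ring
          exact h1.add h2)
        (hcont2.intervalIntegrable 0 1)
      rw [h]
      ring
    rw [hFTC, hint2] at hmono
    linarith
  -- first-order convexity lower bound
  have lower : ∀ a b : H, f a + ⟪gradient f a, b - a⟫ ≤ f b := by
    intro a b
    have h1 := hf_cvx.comp_affineMap (AffineMap.lineMap a b : ℝ →ᵃ[ℝ] H)
    rw [Set.preimage_univ] at h1
    have heq : (f ∘ (AffineMap.lineMap a b : ℝ →ᵃ[ℝ] H))
        = fun t : ℝ => f (a + t • (b - a)) := by
      funext t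
      simp only [Function.comp_apply, AffineMap.lineMap_apply, vsub_eq_sub, vadd_eq_add]
      rw [add_comm]
    rw [heq] at h1
    have hd : HasDerivAt (fun t : ℝ => f (a + t • (b - a))) ⟪gradient f a, b - a⟫ 0 := by
      have := hline a (b - a) 0
      simpa using this
    have hslope := h1.le_slope_of_hasDerivAt (Set.mem_univ (0:ℝ)) (Set.mem_univ (1:ℝ))
      zero_lt_one hd
    rw [slope_def_field] at hslope
    simp only [one_smul, zero_smul, add_zero, add_sub_cancel] at hslope
    norm_num at hslope
    have hgi : ⟪gradient f a, b - a⟫ = (fderiv ℝ f a) b - (fderiv ℝ f a) a := by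
      simp [inner_sub_right]
    linarith
  -- one-sided cocoercivity
  have key1 : ∀ a b : H,
      f a + ⟪gradient f a, b - a⟫
        + 1 / (2 * β) * ⟪Qinv (gradient f b - gradient f a), gradient f b - gradient f a⟫
      ≤ f b := by
    intro a b
    set g := gradient f b - gradient f a with hg
    set w := b - (1 / β) • Qinv g with hw
    have hd := descent b w
    have hl := lower a w
    have hwb : w - b = -((1 / β) • Qinv g) := by rw [hw]; abel
    have e1 : ⟪gradient f b, w - b⟫ = -(1 / β) * ⟪gradient f b, Qinv g⟫ := by
      rw [hwb, inner_neg_right, real_inner_smul_right]; ring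
    have e2 : ⟪Q (w - b), w - b⟫ = (1 / β) ^ 2 * ⟪g, Qinv g⟫ := by
      rw [hwb]
      simp only [map_neg, map_smul, inner_neg_neg, real_inner_smul_left,
        real_inner_smul_right, hQQinv]
      ring
    have e3 : ⟪gradient f a, w - a⟫
        = ⟪gradient f a, b - a⟫ - (1 / β) * ⟪gradient f a, Qinv g⟫ := by
      have : w - a = (b - a) - (1 / β) • Qinv g := by rw [hw]; abel
      rw [this, inner_sub_right, real_inner_smul_right]
    have e4 : ⟪gradient f b, Qinv g⟫ - ⟪gradient f a, Qinv g⟫ = ⟪Qinv g, g⟫ := by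
      have : ⟪g, Qinv g⟫ = ⟪gradient f b, Qinv g⟫ - ⟪gradient f a, Qinv g⟫ := by
        rw [hg, inner_sub_left]
      rw [← this, real_inner_comm]
    have e5 : ⟪g, Qinv g⟫ = ⟪Qinv g, g⟫ := real_inner_comm _ _
    rw [e1, e2] at hd
    rw [e3] at hl
    have hβ' : β ≠ 0 := ne_of_gt hβ
    have hfin : β / 2 * ((1 / β) ^ 2 * ⟪g, Qinv g⟫) = 1 / (2 * β) * ⟪Qinv g, g⟫ := by
      rw [e5]; field_simp
    -- combine
    have comb : f a + ⟪gradient f a, b - a⟫ - (1 / β) * ⟪gradient f a, Qinv g⟫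
        ≤ f b + -(1 / β) * ⟪gradient f b, Qinv g⟫ + β / 2 * ((1 / β) ^ 2 * ⟪g, Qinv g⟫) := by
      linarith [hl, hd]
    rw [hfin] at comb
    have : (1 / β) * (⟪gradient f b, Qinv g⟫ - ⟪gradient f a, Qinv g⟫)
        = (1 / β) * ⟪Qinv g, g⟫ := by rw [e4]
    have h2β : 1 / β - 1 / (2 * β) = 1 / (2 * β) := by field_simp; ring
    have h6 : 1 / β * ⟪Qinv g, g⟫ - 1 / (2 * β) * ⟪Qinv g, g⟫
        = 1 / (2 * β) * ⟪Qinv g, g⟫ := by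
      rw [← sub_mul, h2β]
    linarith [comb, this, h6]
  -- cocoercivity
  have coco : ∀ a b : H,
      1 / β * ⟪Qinv (gradient f a - gradient f b), gradient f a - gradient f b⟫
        ≤ ⟪gradient f a - gradient f b, a - b⟫ := by
    intro a b
    have h1 := key1 a b
    have h2 := key1 b a
    have hq : ⟪Qinv (gradient f a - gradient f b), gradient f a - gradient f b⟫
        = ⟪Qinv (gradient f b - gradient f a), gradient f b - gradient f a⟫ := by
      have hne : gradient f a - gradient f b = -(gradient f b - gradient f a) := by abel
      rw [hne, map_neg, inner_neg_neg]
    rw [← hq] at h1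
    have hab : ⟪gradient f a, b - a⟫ = -⟪gradient f a, a - b⟫ := by
      rw [show b - a = -(a - b) by abel, inner_neg_right]
    have hba : ⟪gradient f b, a - b⟫ = ⟪gradient f b, a - b⟫ := rfl
    rw [inner_sub_left]
    have h2β : 1 / β = 1 / (2 * β) + 1 / (2 * β) := by field_simp; ring
    rw [hab] at h1
    have hq2 : 1 / β * ⟪Qinv (gradient f a - gradient f b), gradient f a - gradient f b⟫
        = 1 / (2 * β) * ⟪Qinv (gradient f a - gradient f b), gradient f a - gradient f b⟫
          + 1 / (2 * β) * ⟪Qinv (gradient f a - gradient f b), gradient f a - gradient f b⟫ := by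
      rw [h2β]; ring
    linarith [h1, h2, hq2]
  -- final three-point bound
  intro x x' x''
  set g := gradient f x - gradient f x' with hgdef
  set u := x'' - x' with hu
  set t := Real.sqrt ⟪Qinv g, g⟫ with htdef
  set s := Real.sqrt ⟪Q u, u⟫ with hsdef
  have ht2 : t ^ 2 = ⟪Qinv g, g⟫ := Real.sq_sqrt (hQinv0 g)
  have hs2 : s ^ 2 = ⟪Q u, u⟫ := Real.sq_sqrt (hQ0 u)
  have hsplit : ⟪g, x'' - x⟫ = ⟪g, u⟫ + ⟪g, x' - x⟫ := by
    rw [← inner_add_right]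
    congr 1
    rw [hu]; abel
  have h1 : ⟪g, u⟫ ≤ t * s := hCS g u
  have h2 : ⟪g, x' - x⟫ ≤ -(1 / β * t ^ 2) := by
    have := coco x x'
    rw [← hgdef] at this
    have hxx : ⟪g, x' - x⟫ = -⟪g, x - x'⟫ := by
      rw [show x' - x = -(x - x') by abel, inner_neg_right]
    rw [hxx, ht2]
    linarith
  have hquad : t * s - 1 / β * t ^ 2 ≤ β / 4 * s ^ 2 := by
    have hmul : β * (t * s) ≤ β * (β / 4 * s ^ 2 + 1 / β * t ^ 2) := by
      have hid : β * (β / 4 * s ^ 2 + 1 / β * t ^ 2) = β ^ 2 / 4 * s ^ 2 + t ^ 2 := by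
        field_simp
      rw [hid]
      nlinarith [sq_nonneg (β * s - 2 * t)]
    have := le_of_mul_le_mul_left hmul hβ
    linarith
  rw [hs2] at hquad
  calc ⟪g, x'' - x⟫ = ⟪g, u⟫ + ⟪g, x' - x⟫ := hsplit
    _ ≤ t * s - 1 / β * t ^ 2 := by linarith
    _ ≤ β / 4 * ⟪Q u, u⟫ := hquad
end

section
/- (Weighted norm identity for the preconditioned update) Let H and G be finite-dimensional real inner product spaces, L: H → G a linear map with adjoint L*, Σ a self-adjoint positive definite operator on G, Γ and Q self-adjoint positive definite operators on H, and β ≥ 0. On Z = G × H define the block operators P(y,x) = (Σ⁻¹y + (1/2)Lx, (1/2)L*y + Γ⁻¹x) and U(y,x) = (Σ⁻¹y − (1/2)Lx, −(1/2)L*y + Γ⁻¹x − (β/4)Qx). Then for all z = (y,x) and ẑ = (ŷ,x̂) in Z, setting t = (ŷ + ΣL(x̂ − x), x̂), one has ⟨P(ẑ − z), ẑ − z⟩ − (β/4)⟨Q(x̂ − x), x̂ − x⟩ = ⟨U(t − z), t − z⟩. -/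
open scoped RealInnerProductSpace

/-- **Weighted norm identity for the preconditioned update.**
With block operators `P(y,x) = (Σ⁻¹y + (1/2)Lx, (1/2)L*y + Γ⁻¹x)` and
`U(y,x) = (Σ⁻¹y − (1/2)Lx, −(1/2)L*y + Γ⁻¹x − (β/4)Qx)` on `Z = G × H`, and
`t = (yh + ΣL(xh − x), xh)`, one has
`⟨P(ẑ − z), ẑ − z⟩ − (β/4)⟨Q(xh − x), xh − x⟩ = ⟨U(t − z), t − z⟩`
(inner products on the product space written out componentwise). -/
theorem weighted_norm_identity
    {H G : Type*} [NormedAddCommGroup H] [InnerProductSpace ℝ H] [FiniteDimensional ℝ H]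
    [NormedAddCommGroup G] [InnerProductSpace ℝ G] [FiniteDimensional ℝ G]
    (L : H →ₗ[ℝ] G) (Ladj : G →ₗ[ℝ] H)
    (hadj : ∀ (x : H) (y : G), ⟪L x, y⟫ = ⟪x, Ladj y⟫)
    (Sg Sgi : G →ₗ[ℝ] G)
    (hSg_sa : ∀ y y' : G, ⟪Sg y, y'⟫ = ⟪y, Sg y'⟫)
    (hSg_pd : ∀ y : G, y ≠ 0 → 0 < ⟪Sg y, y⟫)
    (hSgi : ∀ y : G, Sg (Sgi y) = y) (hSgi' : ∀ y : G, Sgi (Sg y) = y)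
    (Ga Gai Q : H →ₗ[ℝ] H)
    (hGa_sa : ∀ x x' : H, ⟪Ga x, x'⟫ = ⟪x, Ga x'⟫)
    (hGa_pd : ∀ x : H, x ≠ 0 → 0 < ⟪Ga x, x⟫)
    (hGai : ∀ x : H, Ga (Gai x) = x) (hGai' : ∀ x : H, Gai (Ga x) = x)
    (hQ_sa : ∀ x x' : H, ⟪Q x, x'⟫ = ⟪x, Q x'⟫)
    (hQ_pd : ∀ x : H, x ≠ 0 → 0 < ⟪Q x, x⟫)
    (β : ℝ) (hβ : 0 ≤ β) :
    ∀ (y yh : G) (x xh : H),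
      (⟪Sgi (yh - y) + (1 / 2 : ℝ) • L (xh - x), yh - y⟫
          + ⟪(1 / 2 : ℝ) • Ladj (yh - y) + Gai (xh - x), xh - x⟫)
        - β / 4 * ⟪Q (xh - x), xh - x⟫
      = ⟪Sgi (yh + Sg (L (xh - x)) - y) - (1 / 2 : ℝ) • L (xh - x),
            yh + Sg (L (xh - x)) - y⟫
        + ⟪-((1 / 2 : ℝ) • Ladj (yh + Sg (L (xh - x)) - y)) + Gai (xh - x)
            - (β / 4) • Q (xh - x), xh - x⟫ := by
  intro y yh x xh
  set a := yh - y with ha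
  set b := xh - x with hb
  have hsum : yh + Sg (L b) - y = a + Sg (L b) := by rw [ha]; abel
  rw [hsum]
  have k1 : ⟪(Sgi a : G), Sg (L b)⟫ = ⟪a, L b⟫ := by
    rw [← hSg_sa (Sgi a) (L b), hSgi]
  have k2 : ⟪(Ladj (Sg (L b)) : H), b⟫ = ⟪(L b : G), Sg (L b)⟫ := by
    rw [real_inner_comm, ← hadj]
  have k3 : ⟪(Ladj a : H), b⟫ = ⟪(L b : G), a⟫ := by
    rw [real_inner_comm, ← hadj, real_inner_comm]
  simp only [map_add, inner_add_left, inner_add_right, inner_sub_left,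
    inner_sub_right, inner_smul_left, inner_smul_right, inner_neg_left,
    RCLike.conj_to_real, hSgi']
  linear_combination k3 - k1 + (1/2 : ℝ) * k2
    - real_inner_comm (L b) a
end

section
/- (Positive definiteness of the step-size operator 2U − S) Let H and G be finite-dimensional real inner product spaces, L: H → G a linear map with adjoint L* and operator norm ‖L‖, Σ a self-adjoint positive definite operator on G, Γ and Q self-adjoint positive definite operators on H, and β_f ≥ 0. Assume m(Γ⁻¹ − (β_f/2)Q) > ‖L‖² M(Σ). Then the block operator V on G × H defined by V(y,x) = (Σ⁻¹y − Lx, −L*y + Γ⁻¹x − (β_f/2)Qx) is positive definite: there exists τ > 0 such that ⟨V z, z⟩ ≥ τ ‖z‖² for all z ∈ G × H. -/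
open scoped RealInnerProductSpace

lemma quad_lb' {H : Type*} [NormedAddCommGroup H] [InnerProductSpace ℝ H]
    (T : H →ₗ[ℝ] H) (m : ℝ) (h : ∀ u : H, ‖u‖ = 1 → m ≤ ⟪T u, u⟫) (x : H) :
    m * ‖x‖ ^ 2 ≤ ⟪T x, x⟫ := by
  rcases eq_or_ne x 0 with rfl | hx
  · simp
  · have hn : ‖x‖ ≠ 0 := norm_ne_zero_iff.mpr hx
    have hu : ‖(‖x‖⁻¹ • x)‖ = 1 := by
      rw [norm_smul, Real.norm_eq_abs, abs_of_nonneg (inv_nonneg.mpr (norm_nonneg x)),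
        inv_mul_cancel₀ hn]
    have h1 := h _ hu
    rw [map_smul, real_inner_smul_left, real_inner_smul_right] at h1
    have key : ‖x‖⁻¹ * (‖x‖⁻¹ * ⟪T x, x⟫) * ‖x‖ ^ 2 = ⟪T x, x⟫ := by
      rw [sq]
      field_simp
    nlinarith [mul_le_mul_of_nonneg_right h1 (sq_nonneg ‖x‖), key]

lemma quad_ub' {H : Type*} [NormedAddCommGroup H] [InnerProductSpace ℝ H]
    (T : H →ₗ[ℝ] H) (M : ℝ) (h : ∀ u : H, ‖u‖ = 1 → ⟪u, T u⟫ ≤ M) (x : H) :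
    ⟪x, T x⟫ ≤ M * ‖x‖ ^ 2 := by
  rcases eq_or_ne x 0 with rfl | hx
  · simp
  · have hn : ‖x‖ ≠ 0 := norm_ne_zero_iff.mpr hx
    have hu : ‖(‖x‖⁻¹ • x)‖ = 1 := by
      rw [norm_smul, Real.norm_eq_abs, abs_of_nonneg (inv_nonneg.mpr (norm_nonneg x)),
        inv_mul_cancel₀ hn]
    have h1 := h _ hu
    rw [map_smul, real_inner_smul_left, real_inner_smul_right] at h1
    have key : ‖x‖⁻¹ * (‖x‖⁻¹ * ⟪x, T x⟫) * ‖x‖ ^ 2 = ⟪x, T x⟫ := by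
      rw [sq]
      field_simp
    nlinarith [mul_le_mul_of_nonneg_right h1 (sq_nonneg ‖x‖), key]

lemma tau_bound' (m i c τ : ℝ) (h : τ * (m + i + 1) ≤ m * i - c ^ 2) (hτ : 0 ≤ τ) :
    c ^ 2 ≤ (i - τ) * (m - τ) := by nlinarith [sq_nonneg τ]

lemma quad_form_bound' (a b c X Y : ℝ) (ha : 0 < a) (hab : c ^ 2 ≤ a * b)
    (hX : 0 ≤ X) (hY : 0 ≤ Y) : 2 * c * X * Y ≤ a * Y ^ 2 + b * X ^ 2 := by
  nlinarith [sq_nonneg (a * Y - c * X), mul_nonneg (sub_nonneg.mpr hab) (sq_nonneg X)]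

set_option maxHeartbeats 1000000 in
/-- **Positive definiteness of the step-size operator `2U − S`.**
If `m(Γ⁻¹ − (β_f/2)Q) > ‖L‖² M(Σ)`, then the block operator
`V(y,x) = (Σ⁻¹y − Lx, −L*y + Γ⁻¹x − (β_f/2)Qx)` on `G × H` is positive definite:
there is `τ > 0` with `⟨Vz, z⟩ ≥ τ‖z‖²` for all `z = (y,x)` (the inner product on the
product space is the sum of the componentwise inner products). -/
theorem step_size_operator_pos_def
    {H G : Type*} [NormedAddCommGroup H] [InnerProductSpace ℝ H] [FiniteDimensional ℝ H]
    [NormedAddCommGroup G] [InnerProductSpace ℝ G] [FiniteDimensional ℝ G]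
    (L : H →L[ℝ] G) (Ladj : G →L[ℝ] H)
    (hadj : ∀ (x : H) (y : G), ⟪L x, y⟫ = ⟪x, Ladj y⟫)
    (Sg Sgi : G →ₗ[ℝ] G)
    (hSg_sa : ∀ y y' : G, ⟪Sg y, y'⟫ = ⟪y, Sg y'⟫)
    (hSg_pd : ∀ y : G, y ≠ 0 → 0 < ⟪Sg y, y⟫)
    (hSgi_sa : ∀ y y' : G, ⟪Sgi y, y'⟫ = ⟪y, Sgi y'⟫)
    (hSgi_pd : ∀ y : G, y ≠ 0 → 0 < ⟪Sgi y, y⟫)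
    (hSgi : ∀ y : G, Sg (Sgi y) = y) (hSgi' : ∀ y : G, Sgi (Sg y) = y)
    (Ga Gai Q : H →ₗ[ℝ] H)
    (hGa_sa : ∀ x x' : H, ⟪Ga x, x'⟫ = ⟪x, Ga x'⟫)
    (hGa_pd : ∀ x : H, x ≠ 0 → 0 < ⟪Ga x, x⟫)
    (hGai_sa : ∀ x x' : H, ⟪Gai x, x'⟫ = ⟪x, Gai x'⟫)
    (hGai_pd : ∀ x : H, x ≠ 0 → 0 < ⟪Gai x, x⟫)
    (hGai : ∀ x : H, Ga (Gai x) = x) (hGai' : ∀ x : H, Gai (Ga x) = x)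
    (hQ_sa : ∀ x x' : H, ⟪Q x, x'⟫ = ⟪x, Q x'⟫)
    (hQ_pd : ∀ x : H, x ≠ 0 → 0 < ⟪Q x, x⟫)
    (βf : ℝ) (hβf : 0 ≤ βf)
    (mval : ℝ)
    (hm : IsLeast ((fun u : H => ⟪Gai u - (βf / 2) • Q u, u⟫) '' {u | ‖u‖ = 1}) mval)
    (Mval : ℝ)
    (hM : IsGreatest ((fun u : G => ⟪u, Sg u⟫) '' {u | ‖u‖ = 1}) Mval)
    (hstep : ‖L‖ ^ 2 * Mval < mval) :
    ∃ τ : ℝ, 0 < τ ∧ ∀ (y : G) (x : H),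
      ⟪Sgi y - L x, y⟫ + ⟪-(Ladj y) + Gai x - (βf / 2) • Q x, x⟫
        ≥ τ * (‖y‖ ^ 2 + ‖x‖ ^ 2) := by
  obtain ⟨⟨v0, hv0, hMv0⟩, hM_ub⟩ := hM
  have hv0u : ‖v0‖ = 1 := hv0
  have hv0ne : v0 ≠ 0 := by
    intro h; rw [h, norm_zero] at hv0u; exact one_ne_zero hv0u.symm
  have hMv0' : ⟪v0, Sg v0⟫ = Mval := hMv0
  have hMpos : 0 < Mval := by
    rw [← hMv0', real_inner_comm]
    exact hSg_pd v0 hv0ne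
  set c := ‖L‖ with hc
  have hc0 : 0 ≤ c := norm_nonneg L
  have hmpos : 0 < mval := lt_of_le_of_lt (mul_nonneg (sq_nonneg c) hMpos.le) hstep
  -- upper bound: ⟪y, Sg y⟫ ≤ Mval ‖y‖²
  have hSub : ∀ y : G, ⟪y, Sg y⟫ ≤ Mval * ‖y‖ ^ 2 := by
    intro y
    exact quad_ub' Sg Mval (fun u hu => hM_ub ⟨u, hu, rfl⟩) y
  -- lower bound for Gai - (βf/2)Q
  have hA : ∀ x : H, mval * ‖x‖ ^ 2 ≤ ⟪Gai x - (βf / 2) • Q x, x⟫ := by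
    intro x
    have := quad_lb' (Gai - (βf / 2) • Q) mval (fun u hu => by
      have := hm.2 ⟨u, hu, rfl⟩
      simpa using this) x
    simpa using this
  -- key inverse bound: ‖y‖² ≤ Mval * ⟪Sgi y, y⟫ (Cauchy-Schwarz for the form Sg)
  have hSinv : ∀ y : G, ‖y‖ ^ 2 ≤ Mval * ⟪Sgi y, y⟫ := by
    intro y
    rcases eq_or_ne y 0 with rfl | hy
    · simp
    · set w := Sgi y with hw
      set s : ℝ := ⟪Sg y, y⟫ with hs
      set p : ℝ := ‖y‖ ^ 2 with hp
      have hspos : 0 < s := hSg_pd y hy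
      have hppos : 0 < p := by rw [hp]; exact pow_pos (norm_pos_iff.mpr hy) 2
      have hW : ⟪Sg w, w⟫ = ⟪Sgi y, y⟫ := by
        rw [hw, hSgi y, real_inner_comm]
      have hWpos : 0 < ⟪Sg w, w⟫ := by rw [hW]; exact hSgi_pd y hy
      have hpw : ⟪Sg w, y⟫ = p := by
        rw [hw, hSgi y, hp, real_inner_self_eq_norm_sq]
      have hpw' : ⟪Sg y, w⟫ = p := by
        rw [hSg_sa y w]
        show ⟪y, Sg (Sgi y)⟫ = p
        rw [hSgi y, real_inner_self_eq_norm_sq, hp]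
      have hz : (0:ℝ) ≤ ⟪Sg (s • w - p • y), s • w - p • y⟫ := by
        rcases eq_or_ne (s • w - p • y) 0 with h0 | h0
        · rw [h0]; simp
        · exact le_of_lt (hSg_pd _ h0)
      have hexp : ⟪Sg (s • w - p • y), s • w - p • y⟫
          = s ^ 2 * ⟪Sg w, w⟫ - s * p * ⟪Sg w, y⟫ - s * p * ⟪Sg y, w⟫ + p ^ 2 * ⟪Sg y, y⟫ := by
        rw [map_sub, map_smul, map_smul]
        simp only [inner_sub_left, inner_sub_right, real_inner_smul_left, real_inner_smul_right]
        ring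
      rw [hpw, hpw', ← hs] at hexp
      -- from hz, hexp : 0 ≤ s² W - 2 s p² + p² s = s (s W - p²), so s W ≥ p²
      have hCS : p ^ 2 ≤ s * ⟪Sg w, w⟫ := by nlinarith [hz, hexp, hspos]
      -- s ≤ Mval * p
      have hsub' : s ≤ Mval * p := by
        rw [hs, real_inner_comm, hp]; exact hSub y
      -- conclude
      rw [← hW]
      nlinarith [hCS, hsub', hWpos, hppos, hMpos,
        mul_le_mul_of_nonneg_right hsub' hWpos.le]
  -- choose tau
  have hd : (0:ℝ) < mval + 1 / Mval + 1 := by positivity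
  have hr : 0 < mval / Mval - c ^ 2 := by
    rw [sub_pos, lt_div_iff₀ hMpos]; exact hstep
  set τ : ℝ := min (1 / (2 * Mval)) (min (mval / 2) ((mval / Mval - c ^ 2) / (mval + 1 / Mval + 1))) with hτ
  have hτpos : 0 < τ :=
    lt_min (one_div_pos.mpr (by linarith)) (lt_min (by linarith) (div_pos hr hd))
  have hτ1 : τ ≤ 1 / (2 * Mval) := min_le_left _ _
  have hτ2 : τ ≤ mval / 2 := le_trans (min_le_right _ _) (min_le_left _ _)
  have hτ3 : τ ≤ (mval / Mval - c ^ 2) / (mval + 1 / Mval + 1) :=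
    le_trans (min_le_right _ _) (min_le_right _ _)
  have hτd : τ * (mval + 1 / Mval + 1) ≤ mval / Mval - c ^ 2 := by
    rw [← le_div_iff₀ hd]; exact hτ3
  have ha : 1 / (2 * Mval) ≤ 1 / Mval - τ := by
    have h2M : 1 / (2 * Mval) + 1 / (2 * Mval) = 1 / Mval := by
      field_simp
      norm_num
    linarith [hτ1]
  have hapos : 0 < 1 / Mval - τ := lt_of_lt_of_le (by positivity) ha
  have hbpos : 0 < mval - τ := by linarith [hτ2, hmpos]
  have hab : c ^ 2 ≤ (1 / Mval - τ) * (mval - τ) := by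
    apply tau_bound' mval (1 / Mval) c τ _ hτpos.le
    rw [← div_eq_mul_one_div]
    exact hτd
  refine ⟨τ, hτpos, fun y x => ?_⟩
  -- rewrite inner products
  have hLadj : ⟪Ladj y, x⟫ = ⟪L x, y⟫ := by
    rw [real_inner_comm, ← hadj]
  have hLHS : ⟪Sgi y - L x, y⟫ + ⟪-(Ladj y) + Gai x - (βf / 2) • Q x, x⟫
      = ⟪Sgi y, y⟫ + ⟪Gai x - (βf / 2) • Q x, x⟫ - 2 * ⟪L x, y⟫ := by
    simp only [inner_sub_left, inner_add_left, inner_neg_left, hLadj]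
    ring
  rw [ge_iff_le, hLHS]
  have h1 : ‖y‖ ^ 2 ≤ Mval * ⟪Sgi y, y⟫ := hSinv y
  have h2 : mval * ‖x‖ ^ 2 ≤ ⟪Gai x - (βf / 2) • Q x, x⟫ := hA x
  have h3 : ⟪L x, y⟫ ≤ c * ‖x‖ * ‖y‖ :=
    le_trans (real_inner_le_norm _ _)
      (mul_le_mul_of_nonneg_right (L.le_opNorm x) (norm_nonneg y))
  have hS' : (1 / Mval) * ‖y‖ ^ 2 ≤ ⟪Sgi y, y⟫ := by
    rw [div_mul_eq_mul_div, div_le_iff₀ hMpos]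
    linarith [h1]
  have hkey : 2 * c * ‖x‖ * ‖y‖ ≤ (1 / Mval - τ) * ‖y‖ ^ 2 + (mval - τ) * ‖x‖ ^ 2 :=
    quad_form_bound' (1 / Mval - τ) (mval - τ) c ‖x‖ ‖y‖ hapos hab
      (norm_nonneg x) (norm_nonneg y)
  linarith [hS', h2, h3, hkey]
end

section
/- (Fixed points of the TriPD map are primal-dual solutions) Let H and G be finite-dimensional real inner product spaces, f: H → ℝ convex and continuously differentiable, g: H → (−∞,∞] and h: G → (−∞,∞] proper, convex and lower semicontinuous, L: H → G linear with adjoint L*, and Σ, Γ self-adjoint positive definite operators on G and H respectively. Define T: G × H → G × H by Φ₁(y,x) = prox^{Σ⁻¹}_{h*}(y + ΣLx), Φ₂(y,x) = prox^{Γ⁻¹}_g(x − Γ∇f(x) − ΓL*Φ₁(y,x)), T(y,x) = (Φ₁(y,x) + ΣL(Φ₂(y,x) − x), Φ₂(y,x)). Then T(ȳ,x̄) = (ȳ,x̄) if and only if Lx̄ ∈ ∂h*(ȳ) and −(∇f(x̄) + L*ȳ) ∈ ∂g(x̄). -/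
open scoped RealInnerProductSpace

/-- An extended-real-valued function is convex. -/
def ERealConvexOn {H : Type*} [NormedAddCommGroup H] [InnerProductSpace ℝ H]
    (f : H → EReal) : Prop :=
  ∀ x y : H, ∀ a b : ℝ, 0 ≤ a → 0 ≤ b → a + b = 1 →
    f (a • x + b • y) ≤ (a : EReal) * f x + (b : EReal) * f y

/-- An extended-real-valued function is proper: nowhere `⊥` and not identically `⊤`. -/
def ERealProper {H : Type*} [NormedAddCommGroup H] [InnerProductSpace ℝ H]
    (f : H → EReal) : Prop :=
  (∀ x, f x ≠ ⊥) ∧ ∃ x, f x ≠ ⊤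

/-- The subdifferential `∂f(x) = {v | ∀ u, f x + ⟨v, u − x⟩ ≤ f u}`. -/
def ESubdiff {H : Type*} [NormedAddCommGroup H] [InnerProductSpace ℝ H]
    (f : H → EReal) (x : H) : Set H :=
  {v : H | ∀ u : H, f x + ((⟪v, u - x⟫ : ℝ) : EReal) ≤ f u}

/-- The Fenchel conjugate `f*(u) = sup_x {⟨x, u⟩ − f(x)}`. -/
noncomputable def econj {H : Type*} [NormedAddCommGroup H] [InnerProductSpace ℝ H]
    (f : H → EReal) (u : H) : EReal :=
  ⨆ x : H, ((⟪x, u⟫ : ℝ) : EReal) - f x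

/-- `p` is a minimizer of `u ↦ f(u) + (1/2)‖u − x‖²_Q`. -/
def IsWProx {H : Type*} [NormedAddCommGroup H] [InnerProductSpace ℝ H]
    (Q : H →ₗ[ℝ] H) (f : H → EReal) (x p : H) : Prop :=
  ∀ u : H, f p + ((1 / 2 * ⟪Q (p - x), p - x⟫ : ℝ) : EReal)
    ≤ f u + ((1 / 2 * ⟪Q (u - x), u - x⟫ : ℝ) : EReal)

/-- The weighted proximal operator `prox^Q_f(x)`, the (unique, under the standing
assumptions) minimizer of `u ↦ f(u) + (1/2)‖u − x‖²_Q`. -/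
noncomputable def wprox {H : Type*} [NormedAddCommGroup H] [InnerProductSpace ℝ H]
    (Q : H →ₗ[ℝ] H) (f : H → EReal) (x : H) : H :=
  Classical.epsilon (IsWProx Q f x)

lemma ereal_add_lt_add' {a b : ℝ} {x y : EReal} (hx : (a : EReal) < x) (hy : (b : EReal) < y) :
    ((a + b : ℝ) : EReal) < x + y := by
  rw [EReal.coe_add]
  exact EReal.add_lt_add hx hy

lemma lsc_add_cont {E : Type*} [TopologicalSpace E]
    {f : E → EReal} (hf : LowerSemicontinuous f) {q : E → ℝ} (hq : Continuous q) :
    LowerSemicontinuous (fun u => f u + (q u : EReal)) := by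
  intro z c hc
  simp only at hc
  rcases eq_or_ne (f z) ⊥ with hz | hz
  · rw [hz, EReal.bot_add] at hc
    exact absurd hc (not_lt_bot)
  rcases eq_or_ne (f z) ⊤ with hz2 | hz2
  · -- f z = ⊤
    obtain ⟨d, hd⟩ : ∃ d : ℝ, c ≤ (d : EReal) := by
      rcases eq_or_ne c ⊥ with h | h
      · exact ⟨0, h ▸ bot_le⟩
      · refine ⟨c.toReal, EReal.le_coe_toReal ?_⟩
        rintro rfl
        rw [hz2] at hc
        have : (⊤ : EReal) + (q z : EReal) = ⊤ := by
          rw [EReal.top_add_coe]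
        rw [this] at hc
        exact lt_irrefl _ hc
    have h1 : ∀ᶠ u in nhds z, ((d - q z + 1 : ℝ) : EReal) < f u := by
      apply hf z
      rw [hz2]; exact EReal.coe_lt_top _
    have h2 : ∀ᶠ u in nhds z, q z - 1 < q u :=
      (hq.tendsto z).eventually (eventually_gt_nhds (by linarith))
    filter_upwards [h1, h2] with u hu1 hu2
    calc c ≤ (d : EReal) := hd
      _ = (((d - q z + 1) + (q z - 1) : ℝ) : EReal) := by norm_num
      _ < f u + (q u : EReal) := ereal_add_lt_add' hu1 (by exact_mod_cast hu2)
  · -- f z real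
    obtain ⟨r, hr⟩ : ∃ r : ℝ, f z = (r : EReal) := ⟨(f z).toReal, (EReal.coe_toReal hz2 hz).symm⟩
    rw [hr, ← EReal.coe_add] at hc
    obtain ⟨d, hdc, hd⟩ : ∃ d : ℝ, c ≤ (d : EReal) ∧ d < r + q z := by
      rcases eq_or_ne c ⊥ with h | h
      · exact ⟨r + q z - 1, h ▸ bot_le, by linarith⟩
      · refine ⟨c.toReal, EReal.le_coe_toReal (hc.ne_top), ?_⟩
        have := EReal.coe_toReal hc.ne_top h
        rw [← this] at hc
        exact_mod_cast hc
    set ε := (r + q z - d) / 2 with hε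
    have hεpos : 0 < ε := by simp [hε]; linarith
    have h1 : ∀ᶠ u in nhds z, ((r - ε : ℝ) : EReal) < f u := by
      apply hf z
      rw [hr]; exact_mod_cast (by linarith : r - ε < r)
    have h2 : ∀ᶠ u in nhds z, q z - ε < q u :=
      (hq.tendsto z).eventually (eventually_gt_nhds (by linarith))
    filter_upwards [h1, h2] with u hu1 hu2
    calc c ≤ (d : EReal) := hdc
      _ ≤ (((r - ε) + (q z - ε) : ℝ) : EReal) := by
          apply EReal.coe_le_coe_iff.mpr; simp [hε]; linarith
      _ < f u + (q u : EReal) := ereal_add_lt_add' hu1 (by exact_mod_cast hu2)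

lemma pd_bound {E : Type*} [NormedAddCommGroup E] [InnerProductSpace ℝ E]
    [FiniteDimensional ℝ E] (Q : E →ₗ[ℝ] E) (hpd : ∀ v : E, v ≠ 0 → 0 < ⟪Q v, v⟫) :
    ∃ m : ℝ, 0 < m ∧ ∀ v : E, m * ‖v‖ ^ 2 ≤ ⟪Q v, v⟫ := by
  rcases subsingleton_or_nontrivial E with hE | hE
  · refine ⟨1, one_pos, fun v => ?_⟩
    have hv : v = 0 := Subsingleton.elim _ _
    simp [hv]
  · have hne : (Metric.sphere (0 : E) 1).Nonempty :=
      NormedSpace.sphere_nonempty.mpr (by norm_num)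
    have hcont : Continuous fun v : E => ⟪Q v, v⟫ :=
      (Q.continuous_of_finiteDimensional).inner continuous_id
    obtain ⟨w, hw, hmin⟩ := (isCompact_sphere (0 : E) 1).exists_isMinOn hne hcont.continuousOn
    have hwnorm : ‖w‖ = 1 := by simpa using hw
    have hw0 : w ≠ 0 := by intro h; rw [h] at hwnorm; simp at hwnorm
    refine ⟨⟪Q w, w⟫, hpd w hw0, fun v => ?_⟩
    rcases eq_or_ne v 0 with rfl | hv
    · simp
    · have hnv : ‖v‖ ≠ 0 := norm_ne_zero_iff.mpr hv
      set u := ‖v‖⁻¹ • v with hu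
      have hun : u ∈ Metric.sphere (0 : E) 1 := by
        simp [hu, norm_smul, abs_of_nonneg (inv_nonneg.mpr (norm_nonneg v)),
          inv_mul_cancel₀ hnv]
      have hle : ⟪Q w, w⟫ ≤ ⟪Q u, u⟫ := hmin hun
      have hQu : ⟪Q u, u⟫ = ‖v‖⁻¹ * (‖v‖⁻¹ * ⟪Q v, v⟫) := by
        rw [hu, map_smul, real_inner_smul_left, real_inner_smul_right]
      rw [hQu] at hle
      have hnvpos : 0 < ‖v‖ := norm_pos_iff.mpr hv
      have h2 : ⟪Q w, w⟫ * ‖v‖ ^ 2 ≤ (‖v‖⁻¹ * (‖v‖⁻¹ * ⟪Q v, v⟫)) * ‖v‖ ^ 2 :=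
        mul_le_mul_of_nonneg_right hle (by positivity)
      have h3 : (‖v‖⁻¹ * (‖v‖⁻¹ * ⟪Q v, v⟫)) * ‖v‖ ^ 2 = ⟪Q v, v⟫ := by
        rw [pow_two]
        field_simp
      linarith

lemma isClosed_real_epigraph {E : Type*} [TopologicalSpace E] {F : E → EReal}
    (hF : LowerSemicontinuous F) :
    IsClosed {p : E × ℝ | F p.1 ≤ (p.2 : EReal)} := by
  have h1 : IsClosed {p : E × EReal | F p.1 ≤ p.2} := hF.isClosed_epigraph
  have h2 : Continuous fun p : E × ℝ => (p.1, (p.2 : EReal)) :=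
    continuous_fst.prodMk (continuous_coe_real_ereal.comp continuous_snd)
  exact h1.preimage h2

lemma affine_minorant {E : Type*} [NormedAddCommGroup E] [InnerProductSpace ℝ E]
    [FiniteDimensional ℝ E] {f : E → EReal}
    (hbot : ∀ x, f x ≠ ⊥) (htop : ∃ x, f x ≠ ⊤)
    (hconv : ∀ x y : E, ∀ a b : ℝ, 0 ≤ a → 0 ≤ b → a + b = 1 →
      f (a • x + b • y) ≤ (a : EReal) * f x + (b : EReal) * f y)
    (hlsc : LowerSemicontinuous f) :
    ∃ (v : E) (c : ℝ), ∀ x, ((⟪v, x⟫ + c : ℝ) : EReal) ≤ f x := by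
  obtain ⟨x₀, hx₀⟩ := htop
  set r₀ : ℝ := (f x₀).toReal with hr₀def
  have hr₀ : f x₀ = (r₀ : EReal) := (EReal.coe_toReal hx₀ (hbot x₀)).symm
  set Epi : Set (E × ℝ) := {p | f p.1 ≤ (p.2 : EReal)} with hEpi
  have hclosed : IsClosed Epi := isClosed_real_epigraph hlsc
  have hconvex : Convex ℝ Epi := by
    rintro ⟨px, pt⟩ hp ⟨qx, qt⟩ hq a b ha hb hab
    simp only [hEpi, Set.mem_setOf_eq] at hp hq ⊢
    obtain ⟨s, hs, hs'⟩ : ∃ s : ℝ, f px = (s : EReal) ∧ s ≤ pt := by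
      refine ⟨(f px).toReal, (EReal.coe_toReal (fun h => ?_) (hbot px)).symm, ?_⟩
      · rw [h] at hp; exact absurd hp (by simp)
      · have := EReal.coe_toReal (x := f px) (fun h => by rw [h] at hp; exact absurd hp (by simp)) (hbot px)
        rw [← this] at hp; exact_mod_cast hp
    obtain ⟨w, hw, hw'⟩ : ∃ w : ℝ, f qx = (w : EReal) ∧ w ≤ qt := by
      refine ⟨(f qx).toReal, (EReal.coe_toReal (fun h => ?_) (hbot qx)).symm, ?_⟩
      · rw [h] at hq; exact absurd hq (by simp)
      · have := EReal.coe_toReal (x := f qx) (fun h => by rw [h] at hq; exact absurd hq (by simp)) (hbot qx)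
        rw [← this] at hq; exact_mod_cast hq
    have h1 := hconv px qx a b ha hb hab
    rw [hs, hw] at h1
    calc f (a • px + b • qx) ≤ (a : EReal) * (s : EReal) + (b : EReal) * (w : EReal) := h1
      _ = ((a * s + b * w : ℝ) : EReal) := by
          rw [← EReal.coe_mul, ← EReal.coe_mul, ← EReal.coe_add]
      _ ≤ ((a * pt + b * qt : ℝ) : EReal) := by
          apply EReal.coe_le_coe_iff.mpr
          have := mul_le_mul_of_nonneg_left hs' ha
          have := mul_le_mul_of_nonneg_left hw' hb
          linarith
  have hnot : (x₀, r₀ - 1) ∉ Epi := by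
    simp only [hEpi, Set.mem_setOf_eq, hr₀]
    intro hcon
    have : r₀ ≤ r₀ - 1 := by exact_mod_cast hcon
    linarith
  obtain ⟨φ, u, hsep, hpt⟩ := geometric_hahn_banach_closed_point hconvex hclosed hnot
  -- decompose φ
  have hdecomp : ∀ (x : E) (t : ℝ), φ (x, t) = φ (x, 0) + t * φ (0, 1) := by
    intro x t
    have : (x, t) = (x, (0:ℝ)) + t • ((0:E), (1:ℝ)) := by
      simp [Prod.ext_iff]
    rw [this, map_add, map_smul, smul_eq_mul]
  set β : ℝ := φ (0, 1) with hβ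
  have hmem0 : (x₀, r₀) ∈ Epi := by
    simp only [hEpi, Set.mem_setOf_eq, hr₀]; exact le_refl _
  have h1 := hsep _ hmem0
  rw [hdecomp x₀ r₀] at h1
  rw [hdecomp x₀ (r₀ - 1)] at hpt
  have hβneg : β < 0 := by nlinarith
  have hβinv : β * β⁻¹ = 1 := mul_inv_cancel₀ (ne_of_lt hβneg)
  have hβinvneg : β⁻¹ < 0 := inv_lt_zero.mpr hβneg
  set ψc : E →L[ℝ] ℝ := φ.comp (ContinuousLinearMap.inl ℝ E ℝ) with hψc
  set w : E := (InnerProductSpace.toDual ℝ E).symm ψc with hwdef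
  have hwx : ∀ x : E, ⟪w, x⟫ = φ (x, 0) := by
    intro x
    rw [hwdef]
    rw [InnerProductSpace.toDual_symm_apply]
    rfl
  refine ⟨(-β⁻¹) • w, u * β⁻¹, fun x => ?_⟩
  rcases eq_or_ne (f x) ⊤ with hfx | hfx
  · rw [hfx]; exact le_top
  · obtain ⟨s, hs⟩ : ∃ s : ℝ, f x = (s : EReal) :=
      ⟨(f x).toReal, (EReal.coe_toReal hfx (hbot x)).symm⟩
    have hmem : (x, s) ∈ Epi := by
      simp only [hEpi, Set.mem_setOf_eq, hs]; exact le_refl _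
    have h2 := hsep _ hmem
    rw [hdecomp x s] at h2
    rw [hs]
    apply EReal.coe_le_coe_iff.mpr
    rw [real_inner_smul_left, hwx]
    have h3 : -β⁻¹ * (φ (x, 0) + s * β) < -β⁻¹ * u :=
      mul_lt_mul_of_pos_left h2 (by linarith)
    have h4 : -β⁻¹ * (φ (x, 0) + s * β) = -β⁻¹ * φ (x, 0) - s * (β * β⁻¹) := by ring
    rw [hβinv] at h4
    rw [h4] at h3
    linarith

lemma real_of_le_coe {x : EReal} (hbot : x ≠ ⊥) {M : ℝ} (h : x ≤ (M : EReal)) :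
    ∃ s : ℝ, x = (s : EReal) ∧ s ≤ M := by
  have htop : x ≠ ⊤ := fun hc => by rw [hc] at h; exact absurd h (by simp)
  refine ⟨x.toReal, (EReal.coe_toReal htop hbot).symm, ?_⟩
  rw [← EReal.coe_toReal htop hbot] at h
  exact_mod_cast h

lemma wprox_exists {E : Type*} [NormedAddCommGroup E] [InnerProductSpace ℝ E]
    [FiniteDimensional ℝ E] (Q : E →ₗ[ℝ] E) (hpd : ∀ v : E, v ≠ 0 → 0 < ⟪Q v, v⟫)
    {f : E → EReal} (hbot : ∀ x, f x ≠ ⊥) (htop : ∃ x, f x ≠ ⊤)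
    (hconv : ERealConvexOn f) (hlsc : LowerSemicontinuous f) (x : E) :
    ∃ p, IsWProx Q f x p := by
  obtain ⟨m, hm, hQm⟩ := pd_bound Q hpd
  obtain ⟨v, c, hvc⟩ := affine_minorant hbot htop hconv hlsc
  obtain ⟨u₀, hu₀⟩ := htop
  obtain ⟨r₀, hr₀⟩ : ∃ r : ℝ, f u₀ = (r : EReal) := ⟨_, (EReal.coe_toReal hu₀ (hbot u₀)).symm⟩
  set q : E → ℝ := fun u => 1 / 2 * ⟪Q (u - x), u - x⟫ with hqdef
  have hqcont : Continuous q := by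
    have h1 : Continuous fun u : E => u - x := continuous_id.sub continuous_const
    exact continuous_const.mul ((Q.continuous_of_finiteDimensional.comp h1).inner h1)
  have hqnn : ∀ u, 0 ≤ q u := fun u => by
    have h1 : (0:ℝ) ≤ ⟪Q (u - x), u - x⟫ := le_trans (by positivity) (hQm (u - x))
    simp only [hqdef]; linarith
  set F : E → EReal := fun u => f u + ((q u : ℝ) : EReal) with hFdef
  have hFlsc : LowerSemicontinuous F := lsc_add_cont hlsc hqcont
  obtain ⟨M, hMdef⟩ : ∃ M : ℝ, M = r₀ + q u₀ := ⟨_, rfl⟩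
  have hFu₀ : F u₀ = (M : EReal) := by
    simp only [hFdef, hr₀, hMdef, ← EReal.coe_add]
  have hreal : ∀ u, F u ≤ (M : EReal) → ∃ s : ℝ, f u = (s : EReal) ∧ s + q u ≤ M := by
    intro u hu
    have hFu_nebot : F u ≠ ⊥ := by
      simp only [hFdef]
      intro hcon
      rcases EReal.add_eq_bot_iff.mp hcon with h | h
      · exact hbot u h
      · exact absurd h (by simp)
    obtain ⟨s, hs, hsM⟩ := real_of_le_coe hFu_nebot hu
    have hfu_netop : f u ≠ ⊤ := by
      intro hcon
      simp only [hFdef, hcon] at hs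
      rw [EReal.top_add_coe] at hs
      exact absurd hs.symm (by simp)
    obtain ⟨t, ht⟩ : ∃ t : ℝ, f u = (t : EReal) := ⟨_, (EReal.coe_toReal hfu_netop (hbot u)).symm⟩
    refine ⟨t, ht, ?_⟩
    have : F u = ((t + q u : ℝ) : EReal) := by simp only [hFdef, ht, ← EReal.coe_add]
    rw [this] at hu
    exact_mod_cast hu
  obtain ⟨K, hKdef⟩ : ∃ K : ℝ, K = M - c + ‖v‖ * ‖x‖ := ⟨_, rfl⟩
  obtain ⟨B, hBdef⟩ : ∃ B : ℝ, B = 1 + 2 * (|K| + ‖v‖ + 1) / m := ⟨_, rfl⟩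
  have hB1 : 1 ≤ B := by
    have h0 : 0 ≤ 2 * (|K| + ‖v‖ + 1) / m := by positivity
    linarith [hBdef]
  have hball : ∀ u, F u ≤ (M : EReal) → ‖u - x‖ ≤ B := by
    intro u hu
    obtain ⟨s, hs, hsM⟩ := hreal u hu
    have hlow : ⟪v, u⟫ + c ≤ s := by
      have := hvc u; rw [hs] at this; exact_mod_cast this
    have hinner : -(‖v‖ * ‖u‖) ≤ ⟪v, u⟫ :=
      neg_le_of_abs_le (abs_real_inner_le_norm v u)
    have hnu : ‖u‖ ≤ ‖u - x‖ + ‖x‖ := by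
      have := norm_add_le (u - x) x
      rwa [sub_add_cancel] at this
    have hq2 : m * ‖u - x‖ ^ 2 ≤ 2 * q u := by
      have := hQm (u - x); simp only [hqdef]; linarith
    set t : ℝ := ‖u - x‖ with htdef
    have ht0 : 0 ≤ t := norm_nonneg _
    by_contra hcon
    push_neg at hcon
    have hchain : m * t ^ 2 ≤ 2 * |K| + 2 * ‖v‖ * t := by
      have h1 : q u ≤ M - s := by linarith
      have h2 : s ≥ -(‖v‖ * (t + ‖x‖)) + c := by
        have : ‖v‖ * ‖u‖ ≤ ‖v‖ * (t + ‖x‖) :=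
          mul_le_mul_of_nonneg_left hnu (norm_nonneg v)
        linarith
      have h3 : K ≤ |K| := le_abs_self K
      nlinarith [norm_nonneg v, ht0]
    have hmB : m * B = m + 2 * (|K| + ‖v‖ + 1) := by
      rw [hBdef]
      field_simp
    have hmt : m + 2 * (|K| + ‖v‖ + 1) < m * t := by
      rw [← hmB]; exact (mul_lt_mul_iff_right₀ hm).mpr hcon
    have ht1 : 1 < t := lt_of_le_of_lt hB1 hcon
    nlinarith [abs_nonneg K, norm_nonneg v, mul_lt_mul_of_pos_right hmt (lt_trans one_pos ht1)]
  obtain ⟨lb, hlbdef⟩ : ∃ lb : ℝ, lb = c - ‖v‖ * (‖x‖ + B) := ⟨_, rfl⟩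
  have hflow : ∀ u : E, ‖u - x‖ ≤ B → ∀ s : ℝ, f u = (s : EReal) → lb ≤ s := by
    intro u huB s hs
    have hlow : ⟪v, u⟫ + c ≤ s := by
      have := hvc u; rw [hs] at this; exact_mod_cast this
    have hinner : -(‖v‖ * ‖u‖) ≤ ⟪v, u⟫ :=
      neg_le_of_abs_le (abs_real_inner_le_norm v u)
    have hnu : ‖u‖ ≤ ‖u - x‖ + ‖x‖ := by
      have := norm_add_le (u - x) x
      rwa [sub_add_cancel] at this
    have h6 : ‖u‖ ≤ ‖x‖ + B := by linarith
    have h7 : ‖v‖ * ‖u‖ ≤ ‖v‖ * (‖x‖ + B) := mul_le_mul_of_nonneg_left h6 (norm_nonneg v)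
    linarith [hlbdef]
  set C : Set E := Metric.closedBall x B with hCdef
  have hCcomp : IsCompact C := isCompact_closedBall x B
  set KS : Set (E × ℝ) := {p : E × ℝ | F p.1 ≤ ((p.2 : ℝ) : EReal)} ∩ C ×ˢ Set.Icc lb M
    with hKSdef
  have hKScomp : IsCompact KS :=
    ((hCcomp.prod isCompact_Icc).inter_left (isClosed_real_epigraph hFlsc))
  have hu₀C : u₀ ∈ C := by
    rw [hCdef, Metric.mem_closedBall, dist_eq_norm]
    exact hball u₀ (le_of_eq hFu₀)
  have hlbM : lb ≤ M := by
    have h1 : lb ≤ r₀ := hflow u₀ (by rw [← dist_eq_norm, ← Metric.mem_closedBall]; exact hu₀C) r₀ hr₀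
    have := hqnn u₀
    linarith [hMdef]
  have hne : ((u₀, M) : E × ℝ) ∈ KS :=
    ⟨le_of_eq hFu₀, hu₀C, hlbM, le_refl M⟩
  obtain ⟨⟨p, t⟩, hptK, hmin⟩ := hKScomp.exists_isMinOn ⟨_, hne⟩ continuous_snd.continuousOn
  refine ⟨p, fun u => ?_⟩
  have hFp : F p ≤ (t : EReal) := hptK.1
  have htM : t ≤ M := hptK.2.2.2
  show f p + ((1 / 2 * ⟪Q (p - x), p - x⟫ : ℝ) : EReal)
    ≤ f u + ((1 / 2 * ⟪Q (u - x), u - x⟫ : ℝ) : EReal)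
  change F p ≤ F u
  by_cases hu : F u ≤ (M : EReal)
  · obtain ⟨s, hs, hsM⟩ := hreal u hu
    have huC : u ∈ C := by
      rw [hCdef, Metric.mem_closedBall, dist_eq_norm]
      exact hball u hu
    have hFuco : F u = ((s + q u : ℝ) : EReal) := by
      simp only [hFdef, hs, ← EReal.coe_add]
    have hmem2 : ((u, s + q u) : E × ℝ) ∈ KS := by
      refine ⟨le_of_eq hFuco, huC, ?_, hsM⟩
      have h8 := hflow u (by rw [← dist_eq_norm, ← Metric.mem_closedBall]; exact huC) s hs
      have h9 := hqnn u
      show lb ≤ s + q u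
      linarith
    have hts : t ≤ s + q u := hmin hmem2
    calc F p ≤ (t : EReal) := hFp
      _ ≤ ((s + q u : ℝ) : EReal) := by exact_mod_cast hts
      _ = F u := hFuco.symm
  · push_neg at hu
    calc F p ≤ (t : EReal) := hFp
      _ ≤ (M : EReal) := by exact_mod_cast htM
      _ ≤ F u := le_of_lt hu

lemma expand_inner {E : Type*} [NormedAddCommGroup E] [InnerProductSpace ℝ E]
    (Q : E →ₗ[ℝ] E) (hsa : ∀ a b : E, ⟪Q a, b⟫ = ⟪a, Q b⟫) (a b : E) :
    ⟪Q (a + b), a + b⟫ = ⟪Q a, a⟫ + 2 * ⟪Q a, b⟫ + ⟪Q b, b⟫ := by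
  rw [map_add, inner_add_left, inner_add_right, inner_add_right]
  have h1 : ⟪Q b, a⟫ = ⟪Q a, b⟫ := by
    rw [hsa b a, real_inner_comm]
  rw [h1]; ring

lemma isWProx_finite {E : Type*} [NormedAddCommGroup E] [InnerProductSpace ℝ E]
    (Q : E →ₗ[ℝ] E) {f : E → EReal} (hbot : ∀ z, f z ≠ ⊥) (htop : ∃ z, f z ≠ ⊤)
    {x p : E} (hp : IsWProx Q f x p) : ∃ r : ℝ, f p = (r : EReal) := by
  obtain ⟨u₁, hu₁⟩ := htop
  obtain ⟨s, hs⟩ : ∃ s : ℝ, f u₁ = (s : EReal) := ⟨_, (EReal.coe_toReal hu₁ (hbot u₁)).symm⟩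
  have h := hp u₁
  rw [hs, ← EReal.coe_add] at h
  have hnebot : f p + ((1 / 2 * ⟪Q (p - x), p - x⟫ : ℝ) : EReal) ≠ ⊥ := by
    intro hc
    rcases EReal.add_eq_bot_iff.mp hc with h' | h'
    · exact hbot p h'
    · exact EReal.coe_ne_bot _ h'
  obtain ⟨w, hw, _⟩ := real_of_le_coe hnebot h
  have hfp_netop : f p ≠ ⊤ := by
    intro hc
    rw [hc, EReal.top_add_coe] at hw
    exact absurd hw.symm (by simp)
  exact ⟨_, (EReal.coe_toReal hfp_netop (hbot p)).symm⟩

lemma isWProx_mem_subdiff {E : Type*} [NormedAddCommGroup E] [InnerProductSpace ℝ E]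
    (Q : E →ₗ[ℝ] E) (hsa : ∀ a b : E, ⟪Q a, b⟫ = ⟪a, Q b⟫) (hpsd : ∀ v : E, 0 ≤ ⟪Q v, v⟫)
    {f : E → EReal} (hbot : ∀ z, f z ≠ ⊥) (htop : ∃ z, f z ≠ ⊤)
    (hconv : ERealConvexOn f) {x p : E} (hp : IsWProx Q f x p) :
    Q (x - p) ∈ ESubdiff f p := by
  obtain ⟨rp, hrp⟩ := isWProx_finite Q hbot htop hp
  intro u
  rcases eq_or_ne (f u) ⊤ with hfu | hfu
  · rw [hfu]; exact le_top
  obtain ⟨s, hs⟩ : ∃ s : ℝ, f u = (s : EReal) := ⟨_, (EReal.coe_toReal hfu (hbot u)).symm⟩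
  rw [hrp, hs, ← EReal.coe_add]
  apply EReal.coe_le_coe_iff.mpr
  have hxp : ⟪Q (x - p), u - p⟫ = -⟪Q (p - x), u - p⟫ := by
    rw [← neg_sub p x, map_neg, inner_neg_left]
  rw [hxp]
  obtain ⟨D, hD⟩ : ∃ D : ℝ, D = ⟪Q (u - p), u - p⟫ := ⟨_, rfl⟩
  obtain ⟨A, hA⟩ : ∃ A : ℝ, A = ⟪Q (p - x), u - p⟫ := ⟨_, rfl⟩
  rw [← hA]
  have hD0 : 0 ≤ D := hD ▸ hpsd (u - p)
  have hkey : ∀ t : ℝ, 0 < t → t ≤ 1 → 0 ≤ t * (s - rp) + t * A + t ^ 2 / 2 * D := by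
    intro t ht ht1
    have hconvt := hconv u p t (1 - t) (le_of_lt ht) (by linarith) (by ring)
    rw [hs, hrp] at hconvt
    have hwt := hp (t • u + (1 - t) • p)
    rw [hrp] at hwt
    have hwtx : t • u + (1 - t) • p - x = (p - x) + t • (u - p) := by
      rw [smul_sub, sub_smul, one_smul]
      abel
    have hquad : ⟪Q (t • u + (1 - t) • p - x), t • u + (1 - t) • p - x⟫
        = ⟪Q (p - x), p - x⟫ + 2 * (t * A) + t ^ 2 * D := by
      rw [hwtx, expand_inner Q hsa]
      simp only [map_smul, real_inner_smul_left, real_inner_smul_right]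
      rw [← hA, ← hD]
      ring
    have hchain : ((rp + 1 / 2 * ⟪Q (p - x), p - x⟫ : ℝ) : EReal)
        ≤ (((t * s + (1 - t) * rp) + 1 / 2 * (⟪Q (p - x), p - x⟫ + 2 * (t * A) + t ^ 2 * D) : ℝ) : EReal) := by
      calc ((rp + 1 / 2 * ⟪Q (p - x), p - x⟫ : ℝ) : EReal)
          = (rp : EReal) + ((1 / 2 * ⟪Q (p - x), p - x⟫ : ℝ) : EReal) := EReal.coe_add _ _
        _ ≤ f (t • u + (1 - t) • p)
              + ((1 / 2 * ⟪Q (t • u + (1 - t) • p - x), t • u + (1 - t) • p - x⟫ : ℝ) : EReal) := hwt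
        _ ≤ ((t : ℝ) : EReal) * ((s : ℝ) : EReal) + (((1 - t : ℝ)) : EReal) * ((rp : ℝ) : EReal)
              + ((1 / 2 * ⟪Q (t • u + (1 - t) • p - x), t • u + (1 - t) • p - x⟫ : ℝ) : EReal) := by
            exact add_le_add_left hconvt _
        _ = (((t * s + (1 - t) * rp) + 1 / 2 * (⟪Q (p - x), p - x⟫ + 2 * (t * A) + t ^ 2 * D) : ℝ) : EReal) := by
            rw [hquad, ← EReal.coe_mul, ← EReal.coe_mul, ← EReal.coe_add, ← EReal.coe_add]
    have hreal : rp + 1 / 2 * ⟪Q (p - x), p - x⟫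
        ≤ (t * s + (1 - t) * rp) + 1 / 2 * (⟪Q (p - x), p - x⟫ + 2 * (t * A) + t ^ 2 * D) := by
      exact_mod_cast hchain
    nlinarith [hreal]
  have hfin : ∀ ε : ℝ, 0 < ε → 0 ≤ (s - rp) + A + ε := by
    intro ε hε
    obtain ⟨t, ht⟩ : ∃ t : ℝ, t = min 1 (ε / (D + 1)) := ⟨_, rfl⟩
    have ht0 : 0 < t := by
      rw [ht]; exact lt_min one_pos (by positivity)
    have ht1 : t ≤ 1 := by rw [ht]; exact min_le_left _ _
    have htD : t ≤ ε / (D + 1) := by rw [ht]; exact min_le_right _ _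
    have h := hkey t ht0 ht1
    have h2 : t ^ 2 / 2 * D ≤ t * ε := by
      have h3 : t * (D + 1) ≤ ε := by
        calc t * (D + 1) ≤ (ε / (D + 1)) * (D + 1) :=
              mul_le_mul_of_nonneg_right htD (by linarith)
          _ = ε := div_mul_cancel₀ ε (by linarith)
      nlinarith [ht0.le, hD0]
    have h3 : 0 ≤ t * ((s - rp) + A + ε) := by nlinarith
    nlinarith [h3, ht0]
  have hfinal : 0 ≤ (s - rp) + A := by
    by_contra hcon
    push_neg at hcon
    have := hfin (-((s - rp) + A) / 2) (by linarith)
    linarith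
  linarith

lemma subdiff_isWProx {E : Type*} [NormedAddCommGroup E] [InnerProductSpace ℝ E]
    (Q : E →ₗ[ℝ] E) (hsa : ∀ a b : E, ⟪Q a, b⟫ = ⟪a, Q b⟫) (hpsd : ∀ v : E, 0 ≤ ⟪Q v, v⟫)
    {f : E → EReal} {x p : E} (hsub : Q (x - p) ∈ ESubdiff f p) : IsWProx Q f x p := by
  intro u
  have h := hsub u
  have hqineq : 1 / 2 * ⟪Q (p - x), p - x⟫ + -⟪Q (x - p), u - p⟫
      ≤ 1 / 2 * ⟪Q (u - x), u - x⟫ := by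
    have hux : u - x = (p - x) + (u - p) := by abel
    have hexp := expand_inner Q hsa (p - x) (u - p)
    rw [← hux] at hexp
    have hD := hpsd (u - p)
    have hxp : ⟪Q (x - p), u - p⟫ = -⟪Q (p - x), u - p⟫ := by
      rw [← neg_sub p x, map_neg, inner_neg_left]
    rw [hxp]
    linarith
  have hsplit : ((1 / 2 * ⟪Q (p - x), p - x⟫ : ℝ) : EReal)
      = ((⟪Q (x - p), u - p⟫ : ℝ) : EReal)
        + ((1 / 2 * ⟪Q (p - x), p - x⟫ + -⟪Q (x - p), u - p⟫ : ℝ) : EReal) := by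
    rw [← EReal.coe_add]
    congr 1
    ring
  calc f p + ((1 / 2 * ⟪Q (p - x), p - x⟫ : ℝ) : EReal)
      = (f p + ((⟪Q (x - p), u - p⟫ : ℝ) : EReal))
        + ((1 / 2 * ⟪Q (p - x), p - x⟫ + -⟪Q (x - p), u - p⟫ : ℝ) : EReal) := by
        rw [hsplit, ← add_assoc]
    _ ≤ f u + ((1 / 2 * ⟪Q (p - x), p - x⟫ + -⟪Q (x - p), u - p⟫ : ℝ) : EReal) :=
        add_le_add_left h _
    _ ≤ f u + ((1 / 2 * ⟪Q (u - x), u - x⟫ : ℝ) : EReal) :=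
        add_le_add_right (EReal.coe_le_coe_iff.mpr hqineq) _

lemma isWProx_unique {E : Type*} [NormedAddCommGroup E] [InnerProductSpace ℝ E]
    (Q : E →ₗ[ℝ] E) (hsa : ∀ a b : E, ⟪Q a, b⟫ = ⟪a, Q b⟫)
    (hpd : ∀ v : E, v ≠ 0 → 0 < ⟪Q v, v⟫)
    {f : E → EReal} (hbot : ∀ z, f z ≠ ⊥) (htop : ∃ z, f z ≠ ⊤) (hconv : ERealConvexOn f)
    {x p₁ p₂ : E} (h1 : IsWProx Q f x p₁) (h2 : IsWProx Q f x p₂) : p₁ = p₂ := by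
  have hpsd : ∀ v : E, 0 ≤ ⟪Q v, v⟫ := fun v => by
    rcases eq_or_ne v 0 with rfl | hv
    · simp
    · exact le_of_lt (hpd v hv)
  have hs1 := isWProx_mem_subdiff Q hsa hpsd hbot htop hconv h1
  have hs2 := isWProx_mem_subdiff Q hsa hpsd hbot htop hconv h2
  obtain ⟨r1, hr1⟩ := isWProx_finite Q hbot htop h1
  obtain ⟨r2, hr2⟩ := isWProx_finite Q hbot htop h2
  have ha := hs1 p₂
  rw [hr1, hr2, ← EReal.coe_add] at ha
  have hb := hs2 p₁
  rw [hr2, hr1, ← EReal.coe_add] at hb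
  have ha' : r1 + ⟪Q (x - p₁), p₂ - p₁⟫ ≤ r2 := by exact_mod_cast ha
  have hb' : r2 + ⟪Q (x - p₂), p₁ - p₂⟫ ≤ r1 := by exact_mod_cast hb
  by_contra hne
  have hd : p₂ - p₁ ≠ 0 := fun hc => hne (by rw [sub_eq_zero] at hc; exact hc.symm)
  have hpos := hpd _ hd
  have hsubeq : (x - p₁) - (x - p₂) = p₂ - p₁ := by abel
  have hcomp : ⟪Q (x - p₁), p₂ - p₁⟫ - ⟪Q (x - p₂), p₂ - p₁⟫ = ⟪Q (p₂ - p₁), p₂ - p₁⟫ := by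
    rw [← inner_sub_left, ← map_sub, hsubeq]
  have h21 : ⟪Q (x - p₂), p₁ - p₂⟫ = -⟪Q (x - p₂), p₂ - p₁⟫ := by
    rw [← neg_sub p₂ p₁, inner_neg_right]
  rw [h21] at hb'
  linarith

lemma econj_ne_bot {E : Type*} [NormedAddCommGroup E] [InnerProductSpace ℝ E]
    {f : E → EReal} (hbot : ∀ z, f z ≠ ⊥) (htop : ∃ z, f z ≠ ⊤) (u : E) :
    econj f u ≠ ⊥ := by
  obtain ⟨x₀, hx₀⟩ := htop
  obtain ⟨r, hr⟩ : ∃ r : ℝ, f x₀ = (r : EReal) := ⟨_, (EReal.coe_toReal hx₀ (hbot x₀)).symm⟩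
  have hle : ((⟪x₀, u⟫ - r : ℝ) : EReal) ≤ econj f u := by
    have h := le_iSup (fun x : E => ((⟪x, u⟫ : ℝ) : EReal) - f x) x₀
    rwa [hr, ← EReal.coe_sub] at h
  intro hc
  rw [hc] at hle
  exact EReal.coe_ne_bot _ (le_bot_iff.mp hle)

lemma econj_ne_top {E : Type*} [NormedAddCommGroup E] [InnerProductSpace ℝ E]
    [FiniteDimensional ℝ E] {f : E → EReal} (hbot : ∀ z, f z ≠ ⊥) (htop : ∃ z, f z ≠ ⊤)
    (hconv : ERealConvexOn f) (hlsc : LowerSemicontinuous f) :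
    ∃ u, econj f u ≠ ⊤ := by
  obtain ⟨v, c, hvc⟩ := affine_minorant hbot htop hconv hlsc
  refine ⟨v, ?_⟩
  have hle : econj f v ≤ ((-c : ℝ) : EReal) := by
    apply iSup_le
    intro x
    calc ((⟪x, v⟫ : ℝ) : EReal) - f x
        ≤ ((⟪x, v⟫ : ℝ) : EReal) - ((⟪v, x⟫ + c : ℝ) : EReal) :=
          EReal.sub_le_sub (le_refl _) (hvc x)
      _ = ((⟪x, v⟫ - (⟪v, x⟫ + c) : ℝ) : EReal) := (EReal.coe_sub _ _).symm
      _ = ((-c : ℝ) : EReal) := by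
          congr 1
          rw [real_inner_comm x v]
          ring
  intro hc
  rw [hc] at hle
  exact absurd hle (by simp)

lemma econj_conv {E : Type*} [NormedAddCommGroup E] [InnerProductSpace ℝ E]
    {f : E → EReal} (hbot : ∀ z, f z ≠ ⊥) : ERealConvexOn (econj f) := by
  intro u w a b ha hb hab
  apply iSup_le
  intro x
  have h1 : ((⟪x, u⟫ : ℝ) : EReal) - f x ≤ econj f u :=
    le_iSup (fun y : E => ((⟪y, u⟫ : ℝ) : EReal) - f y) x
  have h2 : ((⟪x, w⟫ : ℝ) : EReal) - f x ≤ econj f w :=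
    le_iSup (fun y : E => ((⟪y, w⟫ : ℝ) : EReal) - f y) x
  rcases eq_or_ne (f x) ⊤ with hfx | hfx
  · rw [hfx, EReal.sub_top]
    exact bot_le
  obtain ⟨r, hr⟩ : ∃ r : ℝ, f x = (r : EReal) := ⟨_, (EReal.coe_toReal hfx (hbot x)).symm⟩
  rw [hr, ← EReal.coe_sub] at h1 h2 ⊢
  have hx : ⟪x, a • u + b • w⟫ = a * ⟪x, u⟫ + b * ⟪x, w⟫ := by
    rw [inner_add_right, real_inner_smul_right, real_inner_smul_right]
  calc ((⟪x, a • u + b • w⟫ - r : ℝ) : EReal)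
      = ((a * (⟪x, u⟫ - r) + b * (⟪x, w⟫ - r) : ℝ) : EReal) := by
        congr 1
        rw [hx]
        linear_combination r * hab
    _ = (a : EReal) * ((⟪x, u⟫ - r : ℝ) : EReal) + (b : EReal) * ((⟪x, w⟫ - r : ℝ) : EReal) := by
        rw [← EReal.coe_mul, ← EReal.coe_mul, ← EReal.coe_add]
    _ ≤ (a : EReal) * econj f u + (b : EReal) * econj f w := by
        apply add_le_add
        · exact mul_le_mul_of_nonneg_left h1 (by exact_mod_cast ha)
        · exact mul_le_mul_of_nonneg_left h2 (by exact_mod_cast hb)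

lemma econj_lsc {E : Type*} [NormedAddCommGroup E] [InnerProductSpace ℝ E]
    (f : E → EReal) : LowerSemicontinuous (econj f) := by
  apply lowerSemicontinuous_iSup
  intro x
  rcases eq_or_ne (f x) ⊤ with hfx | hfx
  · have heq : (fun u : E => ((⟪x, u⟫ : ℝ) : EReal) - f x) = fun _ => (⊥ : EReal) := by
      funext u; rw [hfx, EReal.sub_top]
    rw [heq]
    exact lowerSemicontinuous_const
  rcases eq_or_ne (f x) ⊥ with hfb | hfb
  · have heq : (fun u : E => ((⟪x, u⟫ : ℝ) : EReal) - f x) = fun _ => (⊤ : EReal) := by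
      funext u; rw [hfb, EReal.coe_sub_bot]
    rw [heq]
    exact lowerSemicontinuous_const
  · obtain ⟨r, hr⟩ : ∃ r : ℝ, f x = (r : EReal) := ⟨_, (EReal.coe_toReal hfx hfb).symm⟩
    have heq : (fun u : E => ((⟪x, u⟫ : ℝ) : EReal) - f x)
        = fun u => ((⟪x, u⟫ - r : ℝ) : EReal) := by
      funext u; rw [hr, ← EReal.coe_sub]
    rw [heq]
    apply Continuous.lowerSemicontinuous
    exact continuous_coe_real_ereal.comp
      ((continuous_const.inner continuous_id).sub continuous_const)

/-- **Fixed points of the TriPD map are primal-dual solutions.** With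
`Φ₁(y,x) = prox^{Σ⁻¹}_{h*}(y + ΣLx)`,
`Φ₂(y,x) = prox^{Γ⁻¹}_g(x − Γ∇f(x) − ΓL*Φ₁(y,x))` and
`T(y,x) = (Φ₁(y,x) + ΣL(Φ₂(y,x) − x), Φ₂(y,x))`, one has `T(ȳ,x̄) = (ȳ,x̄)` if and
only if `Lx̄ ∈ ∂h*(ȳ)` and `−(∇f(x̄) + L*ȳ) ∈ ∂g(x̄)`. -/
theorem tripd_fixed_points
    {H G : Type*} [NormedAddCommGroup H] [InnerProductSpace ℝ H] [FiniteDimensional ℝ H]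
    [NormedAddCommGroup G] [InnerProductSpace ℝ G] [FiniteDimensional ℝ G]
    (f : H → ℝ) (hf_cvx : ConvexOn ℝ Set.univ f) (hf_smooth : ContDiff ℝ 1 f)
    (g : H → EReal) (hg_proper : ERealProper g) (hg_conv : ERealConvexOn g)
    (hg_lsc : LowerSemicontinuous g)
    (h : G → EReal) (hh_proper : ERealProper h) (hh_conv : ERealConvexOn h)
    (hh_lsc : LowerSemicontinuous h)
    (L : H →ₗ[ℝ] G) (Ladj : G →ₗ[ℝ] H)
    (hadj : ∀ (x : H) (y : G), ⟪L x, y⟫ = ⟪x, Ladj y⟫)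
    (Sg Sgi : G →ₗ[ℝ] G)
    (hSg_sa : ∀ y y' : G, ⟪Sg y, y'⟫ = ⟪y, Sg y'⟫)
    (hSg_pd : ∀ y : G, y ≠ 0 → 0 < ⟪Sg y, y⟫)
    (hSgi : ∀ y : G, Sg (Sgi y) = y) (hSgi' : ∀ y : G, Sgi (Sg y) = y)
    (Ga Gai : H →ₗ[ℝ] H)
    (hGa_sa : ∀ x x' : H, ⟪Ga x, x'⟫ = ⟪x, Ga x'⟫)
    (hGa_pd : ∀ x : H, x ≠ 0 → 0 < ⟪Ga x, x⟫)
    (hGai : ∀ x : H, Ga (Gai x) = x) (hGai' : ∀ x : H, Gai (Ga x) = x) :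
    ∀ (yb : G) (xb : H),
      (wprox Sgi (econj h) (yb + Sg (L xb))
          + Sg (L (wprox Gai g
              (xb - Ga (gradient f xb)
                - Ga (Ladj (wprox Sgi (econj h) (yb + Sg (L xb)))))
            - xb)) = yb
        ∧ wprox Gai g
            (xb - Ga (gradient f xb)
              - Ga (Ladj (wprox Sgi (econj h) (yb + Sg (L xb))))) = xb)
      ↔ (L xb ∈ ESubdiff (econj h) yb
          ∧ -(gradient f xb + Ladj yb) ∈ ESubdiff g xb) := by
  intro yb xb
  have hSgi_sa : ∀ a b : G, ⟪Sgi a, b⟫ = ⟪a, Sgi b⟫ := by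
    intro a b
    calc ⟪Sgi a, b⟫ = ⟪Sgi a, Sg (Sgi b)⟫ := by rw [hSgi]
      _ = ⟪Sg (Sgi a), Sgi b⟫ := (hSg_sa (Sgi a) (Sgi b)).symm
      _ = ⟪a, Sgi b⟫ := by rw [hSgi]
  have hSgi_pd : ∀ y : G, y ≠ 0 → 0 < ⟪Sgi y, y⟫ := by
    intro y hy
    have hy' : Sgi y ≠ 0 := by
      intro hc
      apply hy
      have h0 := hSgi y
      rw [hc, map_zero] at h0
      exact h0.symm
    calc (0:ℝ) < ⟪Sg (Sgi y), Sgi y⟫ := hSg_pd (Sgi y) hy'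
      _ = ⟪Sgi y, Sg (Sgi y)⟫ := hSg_sa _ _
      _ = ⟪Sgi y, y⟫ := by rw [hSgi]
  have hGai_sa : ∀ a b : H, ⟪Gai a, b⟫ = ⟪a, Gai b⟫ := by
    intro a b
    calc ⟪Gai a, b⟫ = ⟪Gai a, Ga (Gai b)⟫ := by rw [hGai]
      _ = ⟪Ga (Gai a), Gai b⟫ := (hGa_sa (Gai a) (Gai b)).symm
      _ = ⟪a, Gai b⟫ := by rw [hGai]
  have hGai_pd : ∀ x : H, x ≠ 0 → 0 < ⟪Gai x, x⟫ := by
    intro x hx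
    have hx' : Gai x ≠ 0 := by
      intro hc
      apply hx
      have h0 := hGai x
      rw [hc, map_zero] at h0
      exact h0.symm
    calc (0:ℝ) < ⟪Ga (Gai x), Gai x⟫ := hGa_pd (Gai x) hx'
      _ = ⟪Gai x, Ga (Gai x)⟫ := hGa_sa _ _
      _ = ⟪Gai x, x⟫ := by rw [hGai]
  have hSgi_psd : ∀ v : G, 0 ≤ ⟪Sgi v, v⟫ := fun v => by
    rcases eq_or_ne v 0 with rfl | hv
    · simp
    · exact le_of_lt (hSgi_pd v hv)
  have hGai_psd : ∀ v : H, 0 ≤ ⟪Gai v, v⟫ := fun v => by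
    rcases eq_or_ne v 0 with rfl | hv
    · simp
    · exact le_of_lt (hGai_pd v hv)
  set φ : G → EReal := econj h with hφdef
  have hφbot : ∀ u, φ u ≠ ⊥ := econj_ne_bot hh_proper.1 hh_proper.2
  have hφtop : ∃ u, φ u ≠ ⊤ := econj_ne_top hh_proper.1 hh_proper.2 hh_conv hh_lsc
  have hφconv : ERealConvexOn φ := econj_conv hh_proper.1
  have hφlsc : LowerSemicontinuous φ := econj_lsc h
  have hex1 : ∀ z : G, ∃ p, IsWProx Sgi φ z p :=
    fun z => wprox_exists Sgi hSgi_pd hφbot hφtop hφconv hφlsc z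
  have hex2 : ∀ z : H, ∃ p, IsWProx Gai g z p :=
    fun z => wprox_exists Gai hGai_pd hg_proper.1 hg_proper.2 hg_conv hg_lsc z
  have hspec1 : ∀ z : G, IsWProx Sgi φ z (wprox Sgi φ z) :=
    fun z => Classical.epsilon_spec (hex1 z)
  have hspec2 : ∀ z : H, IsWProx Gai g z (wprox Gai g z) :=
    fun z => Classical.epsilon_spec (hex2 z)
  have harg1 : Sgi (yb + Sg (L xb) - yb) = L xb := by
    rw [add_sub_cancel_left, hSgi']
  have harg2 : Gai (xb - Ga (gradient f xb) - Ga (Ladj yb) - xb)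
      = -(gradient f xb + Ladj yb) := by
    have h1 : xb - Ga (gradient f xb) - Ga (Ladj yb) - xb
        = -(Ga (gradient f xb + Ladj yb)) := by
      rw [map_add]; abel
    rw [h1, map_neg, hGai']
  constructor
  · rintro ⟨hy, hx⟩
    rw [hx, sub_self, map_zero, map_zero, add_zero] at hy
    have hW1 := hspec1 (yb + Sg (L xb))
    rw [hy] at hW1
    refine ⟨?_, ?_⟩
    · have hsub := isWProx_mem_subdiff Sgi hSgi_sa hSgi_psd hφbot hφtop hφconv hW1
      rwa [harg1] at hsub
    · rw [hy] at hx
      have hW2 := hspec2 (xb - Ga (gradient f xb) - Ga (Ladj yb))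
      rw [hx] at hW2
      have hsub := isWProx_mem_subdiff Gai hGai_sa hGai_psd hg_proper.1 hg_proper.2
        hg_conv hW2
      rwa [harg2] at hsub
  · rintro ⟨h1, h2⟩
    have hW1 : IsWProx Sgi φ (yb + Sg (L xb)) yb := by
      apply subdiff_isWProx Sgi hSgi_sa hSgi_psd
      rw [harg1]
      exact h1
    have hyeq : wprox Sgi φ (yb + Sg (L xb)) = yb :=
      isWProx_unique Sgi hSgi_sa hSgi_pd hφbot hφtop hφconv (hspec1 _) hW1
    have hW2 : IsWProx Gai g (xb - Ga (gradient f xb) - Ga (Ladj yb)) xb := by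
      apply subdiff_isWProx Gai hGai_sa hGai_psd
      rw [harg2]
      exact h2
    have hxeq : wprox Gai g (xb - Ga (gradient f xb) - Ga (Ladj yb)) = xb :=
      isWProx_unique Gai hGai_sa hGai_pd hg_proper.1 hg_proper.2 hg_conv (hspec2 _) hW2
    constructor
    · rw [hyeq, hxeq, sub_self, map_zero, map_zero, add_zero]
    · rw [hyeq, hxeq]
end

section
/- (Baillon–Haddad) Let H be a finite-dimensional real inner product space, f: H → ℝ convex and continuously differentiable, and β > 0. Then ∇f is β-Lipschitz continuous (‖∇f(x) − ∇f(y)‖ ≤ β‖x − y‖ for all x, y) if and only if ∇f is (1/β)-cocoercive, i.e. ⟨∇f(x) − ∇f(y), x − y⟩ ≥ (1/β)‖∇f(x) − ∇f(y)‖² for all x, y ∈ H. -/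
open scoped RealInnerProductSpace

section Aux

variable {H : Type*} [NormedAddCommGroup H] [InnerProductSpace ℝ H] [FiniteDimensional ℝ H]

private lemma line_hasDerivAt (f : H → ℝ) (hf : ContDiff ℝ 1 f) (x v : H) (t : ℝ) :
    HasDerivAt (fun s : ℝ => f (x + s • v)) ⟪gradient f (x + t • v), v⟫ t := by
  have hd : DifferentiableAt ℝ f (x + t • v) := (hf.differentiable one_ne_zero) _
  have hg := hd.hasGradientAt
  rw [hasGradientAt_iff_hasFDerivAt] at hg
  have hline : HasDerivAt (fun s : ℝ => x + s • v) v t := by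
    simpa using ((hasDerivAt_id t).smul_const v).const_add x
  have := hg.comp_hasDerivAt t hline
  simpa [InnerProductSpace.toDual_apply_apply, Function.comp_def] using this

private lemma grad_ineq (f : H → ℝ) (hf_cvx : ConvexOn ℝ Set.univ f) (hf : ContDiff ℝ 1 f)
    (x y : H) : f x + ⟪gradient f x, y - x⟫ ≤ f y := by
  set g : ℝ → ℝ := fun t => f (x + t • (y - x)) with hg
  have hgc : ConvexOn ℝ Set.univ g := by
    have := hf_cvx.comp_affineMap (AffineMap.lineMap x y)
    have he : g = f ∘ (AffineMap.lineMap x y : ℝ →ᵃ[ℝ] H) := by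
      funext t
      simp only [hg, Function.comp_apply, AffineMap.coe_lineMap, vsub_eq_sub, vadd_eq_add]
      rw [add_comm]
    rw [he]
    simpa using this
  have hder : HasDerivAt g ⟪gradient f x, y - x⟫ 0 := by
    have := line_hasDerivAt f hf x (y - x) 0
    simpa using this
  have hs := hgc.le_slope_of_hasDerivAt (Set.mem_univ (0:ℝ)) (Set.mem_univ (1:ℝ))
    one_pos hder
  have h0 : g 0 = f x := by simp [hg]
  have h1 : g 1 = f y := by simp [hg]
  rw [slope_def_field] at hs
  simp only [h0, h1, sub_zero, div_one] at hs
  linarith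

private lemma descent_lemma (f : H → ℝ) (hf : ContDiff ℝ 1 f) (β : ℝ) (hβ : 0 < β)
    (hlip : ∀ x y : H, ‖gradient f x - gradient f y‖ ≤ β * ‖x - y‖) (x y : H) :
    f y ≤ f x + ⟪gradient f x, y - x⟫ + β / 2 * ‖y - x‖ ^ 2 := by
  set v := y - x with hv
  set c : ℝ := ⟪gradient f x, v⟫ with hc
  set ψ : ℝ → ℝ := fun t => f (x + t • v) - t * c - β / 2 * ‖v‖ ^ 2 * t ^ 2 with hψdef
  have hψ : ∀ t : ℝ, HasDerivAt ψ
      (⟪gradient f (x + t • v), v⟫ - c - β * ‖v‖ ^ 2 * t) t := by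
    intro t
    have h1 := line_hasDerivAt f hf x v t
    have h2 : HasDerivAt (fun s : ℝ => s * c) c t := by
      simpa using (hasDerivAt_id t).mul_const c
    have h3 : HasDerivAt (fun s : ℝ => β / 2 * ‖v‖ ^ 2 * s ^ 2)
        (β / 2 * ‖v‖ ^ 2 * (2 * t)) t := by
      simpa using ((hasDerivAt_pow 2 t).const_mul (β / 2 * ‖v‖ ^ 2))
    have := (h1.sub h2).sub h3
    exact this.congr_deriv (by ring)
  have hmono : AntitoneOn ψ (Set.Icc 0 1) := by
    apply antitoneOn_of_deriv_nonpos (convex_Icc 0 1)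
    · exact fun t _ => ((hψ t).differentiableAt.continuousAt).continuousWithinAt
    · intro t _
      exact ((hψ t).differentiableAt).differentiableWithinAt
    · intro t ht
      rw [interior_Icc] at ht
      rw [(hψ t).deriv]
      have hb : ⟪gradient f (x + t • v) - gradient f x, v⟫ ≤ β * ‖v‖ ^ 2 * t := by
        calc ⟪gradient f (x + t • v) - gradient f x, v⟫
            ≤ ‖gradient f (x + t • v) - gradient f x‖ * ‖v‖ := real_inner_le_norm _ _
          _ ≤ (β * ‖(x + t • v) - x‖) * ‖v‖ := by
              gcongr; exact hlip _ _
          _ = β * ‖v‖ ^ 2 * t := by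
              have : ‖(x + t • v) - x‖ = t * ‖v‖ := by
                simp [norm_smul, abs_of_pos ht.1]
              rw [this]; ring
      have := inner_sub_left (𝕜 := ℝ) (gradient f (x + t • v)) (gradient f x) v
      rw [this] at hb
      simp only [hc]
      linarith
  have h01 := hmono (by norm_num : (0:ℝ) ∈ Set.Icc (0:ℝ) 1)
    (by norm_num : (1:ℝ) ∈ Set.Icc (0:ℝ) 1) (by norm_num)
  have hψ0 : ψ 0 = f x := by simp [hψdef]
  have hψ1 : ψ 1 = f y - c - β / 2 * ‖v‖ ^ 2 := by simp [hψdef, hv]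
  rw [hψ0, hψ1] at h01
  simp only [hc, hv] at h01 ⊢
  linarith

private lemma key_ineq (f : H → ℝ) (hf_cvx : ConvexOn ℝ Set.univ f) (hf : ContDiff ℝ 1 f)
    (β : ℝ) (hβ : 0 < β)
    (hlip : ∀ x y : H, ‖gradient f x - gradient f y‖ ≤ β * ‖x - y‖) (x y : H) :
    f x + ⟪gradient f x, y - x⟫ + 1 / (2 * β) * ‖gradient f y - gradient f x‖ ^ 2 ≤ f y := by
  set g := gradient f y - gradient f x with hg
  set u := y - (1 / β) • g with hu
  have hA := grad_ineq f hf_cvx hf x u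
  have hB := descent_lemma f hf β hβ hlip y u
  have huy : u - y = -((1 / β) • g) := by simp [hu]
  have h1 : ⟪gradient f y, u - y⟫ = -(1 / β * ⟪gradient f y, g⟫) := by
    rw [huy, inner_neg_right, real_inner_smul_right]
  have h2 : ‖u - y‖ ^ 2 = (1 / β) ^ 2 * ‖g‖ ^ 2 := by
    rw [huy, norm_neg, norm_smul, mul_pow]
    rw [Real.norm_eq_abs, abs_of_pos (by positivity : (0:ℝ) < 1 / β)]
  have h3 : ⟪gradient f x, u - x⟫
      = ⟪gradient f x, y - x⟫ - 1 / β * ⟪gradient f x, g⟫ := by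
    have : u - x = (y - x) - (1 / β) • g := by rw [hu]; abel
    rw [this, inner_sub_right, real_inner_smul_right]
  have h4 : ⟪gradient f y, g⟫ - ⟪gradient f x, g⟫ = ‖g‖ ^ 2 := by
    rw [← inner_sub_left, ← hg, real_inner_self_eq_norm_sq]
  rw [h1, h2] at hB
  rw [h3] at hA
  have hβ2 : β / 2 * ((1 / β) ^ 2 * ‖g‖ ^ 2) = 1 / (2 * β) * ‖g‖ ^ 2 := by
    field_simp
  rw [hβ2] at hB
  have h4' : 1 / β * ⟪gradient f y, g⟫ - 1 / β * ⟪gradient f x, g⟫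
      = 1 / β * ‖g‖ ^ 2 := by rw [← mul_sub, h4]
  have h5 : 1 / β * ‖g‖ ^ 2 = 1 / (2 * β) * ‖g‖ ^ 2 + 1 / (2 * β) * ‖g‖ ^ 2 := by
    field_simp; ring
  linarith [hA, hB, h4', h5]

end Aux

/-- **Baillon–Haddad theorem.** For a convex continuously differentiable `f : H → ℝ`
and `β > 0`, the gradient `∇f` is `β`-Lipschitz if and only if it is `(1/β)`-cocoercive:
`⟨∇f x − ∇f y, x − y⟩ ≥ (1/β)‖∇f x − ∇f y‖²` for all `x, y`. -/
theorem baillon_haddad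
    {H : Type*} [NormedAddCommGroup H] [InnerProductSpace ℝ H] [FiniteDimensional ℝ H]
    (f : H → ℝ) (hf_cvx : ConvexOn ℝ Set.univ f) (hf_smooth : ContDiff ℝ 1 f)
    (β : ℝ) (hβ : 0 < β) :
    (∀ x y : H, ‖gradient f x - gradient f y‖ ≤ β * ‖x - y‖)
      ↔ (∀ x y : H,
          ⟪gradient f x - gradient f y, x - y⟫ ≥ 1 / β * ‖gradient f x - gradient f y‖ ^ 2) := by
  constructor
  · intro hlip x y
    have h1 := key_ineq f hf_cvx hf_smooth β hβ hlip x y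
    have h2 := key_ineq f hf_cvx hf_smooth β hβ hlip y x
    have hsym : ‖gradient f x - gradient f y‖ = ‖gradient f y - gradient f x‖ :=
      norm_sub_rev _ _
    have hin : ⟪gradient f x, y - x⟫ + ⟪gradient f y, x - y⟫
        = -⟪gradient f x - gradient f y, x - y⟫ := by
      rw [inner_sub_left]
      have : (y - x : H) = -(x - y) := by abel
      rw [this, inner_neg_right]
      ring
    rw [← hsym] at h1
    have hb : 1 / β * ‖gradient f x - gradient f y‖ ^ 2
        = 1 / (2 * β) * ‖gradient f x - gradient f y‖ ^ 2
          + 1 / (2 * β) * ‖gradient f x - gradient f y‖ ^ 2 := by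
      field_simp; ring
    linarith [h1, h2, hin]
  · intro hco x y
    have h := hco x y
    have hcs := real_inner_le_norm (gradient f x - gradient f y) (x - y)
    set n := ‖gradient f x - gradient f y‖ with hn
    have hn0 : 0 ≤ n := norm_nonneg _
    rcases eq_or_lt_of_le hn0 with h0 | h0
    · rw [← h0]; positivity
    · have hle : 1 / β * n ^ 2 ≤ n * ‖x - y‖ := le_trans h hcs
      have hmul : n ^ 2 ≤ β * (n * ‖x - y‖) := by
        have := mul_le_mul_of_nonneg_left hle hβ.le
        calc n ^ 2 = β * (1 / β * n ^ 2) := by field_simp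
          _ ≤ β * (n * ‖x - y‖) := this
      nlinarith [hmul, h0]
end

section
/- (Gap between stochastic and deterministic updates) Let H and G be finite-dimensional real inner product spaces, g: H → (−∞,∞] proper, convex and lower semicontinuous, L: H → G linear with adjoint L*, and Σ, Γ self-adjoint positive definite operators on G and H. Let x, d, q, w ∈ H, and set x̂ = prox^{Γ⁻¹}_g(x − Γ(d + w) − Γq) and x̄ = prox^{Γ⁻¹}_g(x − Γd − Γq). Then ‖ΣL(x̂ − x̄)‖² + ‖x̂ − x̄‖² ≤ ((1 + M(L*Σ²L)) / m(Γ⁻¹)) ‖w‖²_Γ. -/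
open scoped RealInnerProductSpace

/-! ### Auxiliary lemmas -/


/-- Lower semicontinuous `EReal`-valued functions attain their minimum on compact sets. -/
theorem lsc_exists_min {β : Type*} [TopologicalSpace β] [T2Space β] {f : β → EReal}
    (hf : LowerSemicontinuous f) {s : Set β} (hs : IsCompact s) (hne : s.Nonempty) :
    ∃ p ∈ s, ∀ u ∈ s, f p ≤ f u := by
  haveI : Nonempty s := hne.to_subtype
  set Z : s → Set β := fun y => s ∩ f ⁻¹' Set.Iic (f y) with hZ
  have hZcl : ∀ y : s, IsClosed (Z y) := fun y =>
    hs.isClosed.inter (hf.isClosed_preimage (f y))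
  have hZcpt : ∀ y : s, IsCompact (Z y) := fun y =>
    hs.of_isClosed_subset (hZcl y) Set.inter_subset_left
  have hZne : ∀ y : s, (Z y).Nonempty := fun y =>
    ⟨y, y.2, Set.mem_preimage.2 (Set.mem_Iic.2 le_rfl)⟩
  have hdir : Directed (· ⊇ ·) Z := by
    intro y y'
    rcases le_total (f y) (f y') with h | h
    · exact ⟨y, subset_rfl, fun z hz => ⟨hz.1, le_trans hz.2 h⟩⟩
    · exact ⟨y', fun z hz => ⟨hz.1, le_trans hz.2 h⟩, subset_rfl⟩
  obtain ⟨p, hp⟩ :=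
    IsCompact.nonempty_iInter_of_directed_nonempty_isCompact_isClosed Z hdir hZne hZcpt hZcl
  simp only [Set.mem_iInter] at hp
  obtain ⟨y0⟩ := (inferInstance : Nonempty s)
  exact ⟨p, (hp y0).1, fun u hu => (hp ⟨u, hu⟩).2⟩

lemma le_of_forall_Ioc {X Y c : ℝ} (h : ∀ t : ℝ, 0 < t → t ≤ 1 → X ≤ Y + t * c) : X ≤ Y := by
  rcases le_or_gt c 0 with hc | hc
  · have := h 1 one_pos le_rfl; nlinarith
  · by_contra hXY
    push_neg at hXY
    have ht1 : (0:ℝ) < min 1 ((X - Y) / (2 * c)) := by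
      apply lt_min one_pos
      apply div_pos (by linarith) (by linarith)
    have := h _ ht1 (min_le_left _ _)
    have h2 : min 1 ((X - Y) / (2 * c)) ≤ (X - Y) / (2 * c) := min_le_right _ _
    have h3 : (min 1 ((X - Y) / (2 * c))) * c ≤ ((X - Y) / (2 * c)) * c :=
      mul_le_mul_of_nonneg_right h2 hc.le
    have h4 : (X - Y) / (2 * c) * c = (X - Y) / 2 := by
      field_simp
    rw [h4] at h3
    nlinarith

lemma Q_expand {H : Type*} [NormedAddCommGroup H] [InnerProductSpace ℝ H]
    (Q : H →ₗ[ℝ] H) (hQsa : ∀ x y : H, ⟪Q x, y⟫ = ⟪x, Q y⟫) (y z : H) (t : ℝ) :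
    ⟪Q (y + t • z), y + t • z⟫ = ⟪Q y, y⟫ + 2 * t * ⟪Q y, z⟫ + t ^ 2 * ⟪Q z, z⟫ := by
  have hyz : ⟪Q z, y⟫ = ⟪Q y, z⟫ := by rw [hQsa, real_inner_comm]
  simp only [map_add, map_smul, inner_add_left, inner_add_right, real_inner_smul_left,
    real_inner_smul_right, smul_eq_mul]
  rw [hyz]; ring

lemma Q_cauchy_schwarz {H : Type*} [NormedAddCommGroup H] [InnerProductSpace ℝ H]
    (Q : H →ₗ[ℝ] H) (hQsa : ∀ x y : H, ⟪Q x, y⟫ = ⟪x, Q y⟫)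
    (hQps : ∀ v : H, 0 ≤ ⟪Q v, v⟫) (e d : H) :
    ⟪Q e, d⟫ ^ 2 ≤ ⟪Q e, e⟫ * ⟪Q d, d⟫ := by
  have h := discrim_le_zero (a := ⟪Q d, d⟫) (b := 2 * ⟪Q e, d⟫) (c := ⟪Q e, e⟫) ?_
  · simp only [discrim] at h; nlinarith
  · intro t
    have := hQps (e + t • d)
    rw [Q_expand Q hQsa e d t] at this
    have hed : ⟪Q e, d⟫ = ⟪Q d, e⟫ := by rw [hQsa, real_inner_comm]
    nlinarith

/-- Firm-nonexpansiveness-type bound for weighted proximal minimizers. -/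
theorem isWProx_firm {H : Type*} [NormedAddCommGroup H] [InnerProductSpace ℝ H]
    (Q : H →ₗ[ℝ] H) (hQsa : ∀ x y : H, ⟪Q x, y⟫ = ⟪x, Q y⟫)
    (hQps : ∀ v : H, 0 ≤ ⟪Q v, v⟫)
    (g : H → EReal) (hproper : ERealProper g) (hconv : ERealConvexOn g)
    {a b p p' : H} (hp : IsWProx Q g a p) (hp' : IsWProx Q g b p') :
    ⟪Q (p - p'), p - p'⟫ ≤ ⟪Q (a - b), a - b⟫ := by
  obtain ⟨hnb, x₀, hx₀⟩ := hproper
  have hfin : ∀ {c pc : H}, IsWProx Q g c pc → g pc ≠ ⊤ := by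
    intro c pc hpc htop
    have h := hpc x₀
    rw [htop, EReal.top_add_coe] at h
    exact (EReal.add_lt_top hx₀ (EReal.coe_ne_top _)).ne (top_le_iff.1 h)
  set gp : ℝ := (g p).toReal with hgpdef
  have hgp : g p = (gp : EReal) := (EReal.coe_toReal (hfin hp) (hnb p)).symm
  set gp' : ℝ := (g p').toReal with hgp'def
  have hgp' : g p' = (gp' : EReal) := (EReal.coe_toReal (hfin hp') (hnb p')).symm
  set z : H := p' - p with hz
  set z' : H := p - p' with hz'
  have hXX : ⟪Q z, z⟫ = ⟪Q z', z'⟫ := by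
    simp only [hz, hz', map_sub, inner_sub_left, inner_sub_right]; ring
  set X : ℝ := ⟪Q z', z'⟫ with hX
  set Y : ℝ := ⟪Q (b - a), z⟫ with hY
  have key : X ≤ Y := by
    apply le_of_forall_Ioc (c := X)
    intro t ht ht1
    have hv : p + t • z = (1 - t) • p + t • p' := by
      rw [hz, smul_sub, sub_smul, one_smul]; abel
    have hv' : p' + t • z' = (1 - t) • p' + t • p := by
      rw [hz', smul_sub, sub_smul, one_smul]; abel
    have hc1 : g (p + t • z) ≤ ((1 - t) * gp + t * gp' : ℝ) := by
      rw [hv]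
      calc g ((1 - t) • p + t • p')
          ≤ ((1 - t : ℝ) : EReal) * g p + (t : EReal) * g p' :=
            hconv p p' (1 - t) t (by linarith) ht.le (by ring)
        _ = (((1 - t) * gp + t * gp' : ℝ) : EReal) := by
            rw [hgp, hgp', ← EReal.coe_mul, ← EReal.coe_mul, ← EReal.coe_add]
    have hc2 : g (p' + t • z') ≤ ((1 - t) * gp' + t * gp : ℝ) := by
      rw [hv']
      calc g ((1 - t) • p' + t • p)
          ≤ ((1 - t : ℝ) : EReal) * g p' + (t : EReal) * g p :=
            hconv p' p (1 - t) t (by linarith) ht.le (by ring)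
        _ = (((1 - t) * gp' + t * gp : ℝ) : EReal) := by
            rw [hgp, hgp', ← EReal.coe_mul, ← EReal.coe_mul, ← EReal.coe_add]
    have hm1 : gp + 1 / 2 * ⟪Q (p - a), p - a⟫
        ≤ ((1 - t) * gp + t * gp') + 1 / 2 * ⟪Q (p + t • z - a), p + t • z - a⟫ := by
      have h := hp (p + t • z)
      rw [hgp, ← EReal.coe_add] at h
      have h2 := add_le_add hc1
        (le_refl (((1 / 2 * ⟪Q (p + t • z - a), p + t • z - a⟫ : ℝ)) : EReal))
      rw [← EReal.coe_add] at h2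
      exact_mod_cast le_trans h h2
    have hm2 : gp' + 1 / 2 * ⟪Q (p' - b), p' - b⟫
        ≤ ((1 - t) * gp' + t * gp) + 1 / 2 * ⟪Q (p' + t • z' - b), p' + t • z' - b⟫ := by
      have h := hp' (p' + t • z')
      rw [hgp', ← EReal.coe_add] at h
      have h2 := add_le_add hc2
        (le_refl (((1 / 2 * ⟪Q (p' + t • z' - b), p' + t • z' - b⟫ : ℝ)) : EReal))
      rw [← EReal.coe_add] at h2
      exact_mod_cast le_trans h h2
    have he1 : ⟪Q (p + t • z - a), p + t • z - a⟫
        = ⟪Q (p - a), p - a⟫ + 2 * t * ⟪Q (p - a), z⟫ + t ^ 2 * ⟪Q z, z⟫ := by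
      have : p + t • z - a = (p - a) + t • z := by abel
      rw [this, Q_expand Q hQsa]
    have he2 : ⟪Q (p' + t • z' - b), p' + t • z' - b⟫
        = ⟪Q (p' - b), p' - b⟫ + 2 * t * ⟪Q (p' - b), z'⟫ + t ^ 2 * ⟪Q z', z'⟫ := by
      have : p' + t • z' - b = (p' - b) + t • z' := by abel
      rw [this, Q_expand Q hQsa]
    rw [he1, hXX] at hm1
    rw [he2] at hm2
    have hsum : 0 ≤ t * ((⟪Q (p - a), z⟫ + ⟪Q (p' - b), z'⟫ + t * X) * 1) := by
      ring_nf
      ring_nf at hm1 hm2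
      nlinarith [hm1, hm2]
    have hdiv : 0 ≤ ⟪Q (p - a), z⟫ + ⟪Q (p' - b), z'⟫ + t * X :=
      nonneg_of_mul_nonneg_right (by linarith [hsum]) ht
    have hid : ⟪Q (p - a), z⟫ + ⟪Q (p' - b), z'⟫ = Y - X := by
      simp only [hY, hX, hz, hz', map_sub, inner_sub_left, inner_sub_right]
      ring
    linarith [hdiv, hid.symm.le]
  have hT : ⟪Q (b - a), b - a⟫ = ⟪Q (a - b), a - b⟫ := by
    simp only [map_sub, inner_sub_left, inner_sub_right]; ring
  have hcs := Q_cauchy_schwarz Q hQsa hQps (b - a) z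
  have hX0 : 0 ≤ X := hQps z'
  show X ≤ _
  nlinarith [hcs, key, hX0, hQps (b - a), hT]

set_option maxHeartbeats 1000000 in
/-- Existence of a weighted proximal minimizer. -/
theorem exists_isWProx {H : Type*} [NormedAddCommGroup H] [InnerProductSpace ℝ H]
    [FiniteDimensional ℝ H]
    (g : H → EReal) (hproper : ERealProper g) (hconv : ERealConvexOn g)
    (hlsc : LowerSemicontinuous g)
    (Q : H →ₗ[ℝ] H) {m : ℝ} (hm : 0 < m) (hQm : ∀ v : H, m * ‖v‖ ^ 2 ≤ ⟪Q v, v⟫)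
    (x : H) : ∃ p : H, IsWProx Q g x p := by
  obtain ⟨hnb, x₀, hx₀⟩ := hproper
  rcases subsingleton_or_nontrivial H with hsub | hnt
  · exact ⟨x₀, fun u => le_of_eq (by rw [Subsingleton.elim u x₀])⟩
  set φ : H → EReal := fun u => g u + ((1 / 2 * ⟪Q (u - x), u - x⟫ : ℝ) : EReal) with hφ
  have hQcont : Continuous fun u : H => (1 / 2 * ⟪Q (u - x), u - x⟫ : ℝ) := by
    have hQc : Continuous Q := Q.continuous_of_finiteDimensional
    have hsub : Continuous fun u : H => u - x := continuous_id.sub continuous_const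
    exact continuous_const.mul ((hQc.comp hsub).inner hsub)
  have hφlsc : LowerSemicontinuous φ := by
    apply hlsc.add' ((continuous_coe_real_ereal.comp hQcont).lowerSemicontinuous)
    intro u
    apply EReal.continuousAt_add
    · exact Or.inr (EReal.coe_ne_bot _)
    · exact Or.inl (hnb u)
  set g₀ : ℝ := (g x₀).toReal with hg₀def
  have hg₀ : g x₀ = (g₀ : EReal) := (EReal.coe_toReal hx₀ (hnb x₀)).symm
  set c₀ : ℝ := 1 / 2 * ⟪Q (x₀ - x), x₀ - x⟫ with hc₀
  have hφx₀ : φ x₀ = ((g₀ + c₀ : ℝ) : EReal) := by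
    rw [hφ]; simp only [hg₀, ← EReal.coe_add]; rfl
  obtain ⟨e, he⟩ := exists_norm_eq H (zero_le_one)
  have hsph_ne : (Metric.sphere x₀ 1).Nonempty := by
    refine ⟨x₀ + e, ?_⟩
    simp [Metric.mem_sphere, dist_eq_norm, he]
  obtain ⟨v₀, hv₀s, hv₀min⟩ := lsc_exists_min hlsc (isCompact_sphere x₀ 1) hsph_ne
  obtain ⟨C, hC⟩ : ∃ C : ℝ, (C : EReal) ≤ g v₀ := by
    by_cases h : g v₀ = ⊤
    · exact ⟨0, by rw [h]; exact le_top⟩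
    · exact ⟨(g v₀).toReal, (EReal.coe_toReal h (hnb v₀)).le⟩
  have hCg : ∀ v ∈ Metric.sphere x₀ 1, (C : EReal) ≤ g v := fun v hv =>
    hC.trans (hv₀min v hv)
  set K : ℝ := ‖x₀ - x‖ with hK
  set A : ℝ := |g₀| + |c₀| with hA
  set B : ℝ := |g₀| + |C| with hB
  set R : ℝ := 1 + K + 2 * (A + B * K + B) / m with hR
  have hA0 : 0 ≤ A := by positivity
  have hB0 : 0 ≤ B := by positivity
  have hK0 : 0 ≤ K := norm_nonneg _
  have hdiv0 : 0 ≤ 2 * (A + B * K + B) / m := by positivity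
  have hR1 : 1 ≤ R := by rw [hR]; linarith
  have hcoer : ∀ u : H, φ u ≤ φ x₀ → ‖u - x₀‖ ≤ R := by
    intro u hu
    by_contra hcon
    push_neg at hcon
    set t : ℝ := ‖u - x₀‖ with htdef
    have ht1 : 1 < t := lt_of_lt_of_le (lt_of_le_of_lt hR1 hcon) le_rfl
    have ht0 : (0:ℝ) < t := by linarith
    have htK : K + 1 < t := by rw [hR] at hcon; linarith
    have hgut : g u ≠ ⊤ := by
      intro h
      rw [hφx₀] at hu
      have : φ u = ⊤ := by
        show g u + _ = ⊤
        rw [h, EReal.top_add_coe]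
      rw [this] at hu
      exact (EReal.coe_lt_top (g₀ + c₀)).not_ge hu
    set gu : ℝ := (g u).toReal with hgudef
    have hgu : g u = (gu : EReal) := (EReal.coe_toReal hgut (hnb u)).symm
    have hu' : gu + 1 / 2 * ⟪Q (u - x), u - x⟫ ≤ g₀ + c₀ := by
      rw [hφx₀, hφ] at hu
      simp only [hgu, ← EReal.coe_add] at hu
      exact_mod_cast hu
    have htinv0 : (0:ℝ) < t⁻¹ := by positivity
    have htinv1 : t⁻¹ ≤ 1 := by
      rw [inv_le_one_iff₀]; right; linarith
    have htt : t * t⁻¹ = 1 := mul_inv_cancel₀ (ne_of_gt ht0)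
    set v : H := x₀ + t⁻¹ • (u - x₀) with hv
    have hveq : v = (1 - t⁻¹) • x₀ + t⁻¹ • u := by
      rw [hv, sub_smul, one_smul, smul_sub]; abel
    have hvs : v ∈ Metric.sphere x₀ 1 := by
      simp only [hv, Metric.mem_sphere, dist_eq_norm, add_sub_cancel_left, norm_smul,
        Real.norm_eq_abs, abs_of_pos htinv0]
      rw [← htdef, inv_mul_cancel₀ (ne_of_gt ht0)]
    have hCr : C ≤ (1 - t⁻¹) * g₀ + t⁻¹ * gu := by
      have h1 := hconv x₀ u (1 - t⁻¹) t⁻¹ (by linarith) htinv0.le (by ring)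
      rw [← hveq] at h1
      have h2 : ((1 - t⁻¹ : ℝ) : EReal) * g x₀ + ((t⁻¹ : ℝ) : EReal) * g u
          = (((1 - t⁻¹) * g₀ + t⁻¹ * gu : ℝ) : EReal) := by
        rw [hg₀, hgu, ← EReal.coe_mul, ← EReal.coe_mul, ← EReal.coe_add]
      rw [h2] at h1
      exact_mod_cast (hCg v hvs).trans h1
    have hgu_lb : t * C - (t - 1) * g₀ ≤ gu := by
      have h3 := mul_le_mul_of_nonneg_left hCr ht0.le
      have h4 : t * ((1 - t⁻¹) * g₀ + t⁻¹ * gu) = (t - 1) * g₀ + gu := by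
        linear_combination (gu - g₀) * htt
      rw [h4] at h3; linarith
    have hq : m / 2 * ‖u - x‖ ^ 2 ≤ 1 / 2 * ⟪Q (u - x), u - x⟫ := by
      linarith [hQm (u - x)]
    have hnorm : t - K ≤ ‖u - x‖ := by
      have h5 : ‖u - x₀‖ ≤ ‖u - x‖ + ‖x - x₀‖ := norm_sub_le_norm_sub_add_norm_sub u x x₀
      have h6 : ‖x - x₀‖ = K := by rw [hK, norm_sub_rev]
      rw [← htdef] at h5; linarith
    have hn0 : (0:ℝ) ≤ ‖u - x‖ := norm_nonneg _
    have hstep1 : m / 2 * (t - K) ^ 2 ≤ A + B * t := by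
      have hsq : (t - K) ^ 2 ≤ ‖u - x‖ ^ 2 := by nlinarith
      have habs1 : g₀ ≤ |g₀| := le_abs_self _
      have habs2 : -|g₀| ≤ g₀ := neg_abs_le _
      have habs3 : c₀ ≤ |c₀| := le_abs_self _
      have habs4 : -|C| ≤ C := neg_abs_le _
      nlinarith [hu', hq, hgu_lb, hsq]
    have hmt : m + 2 * (A + B * K + B) < m * (t - K) := by
      have h7 : 2 * (A + B * K + B) / m < t - K - 1 := by rw [hR] at hcon; linarith
      have h8 := (div_lt_iff₀ hm).1 h7
      nlinarith
    have h10 := mul_lt_mul_of_pos_right hmt (by linarith : (0:ℝ) < t - K)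
    nlinarith [h10, hstep1, mul_pos hm (by linarith : (0:ℝ) < t - K),
      mul_nonneg (add_nonneg hA0 (mul_nonneg hB0 hK0)) (by linarith : (0:ℝ) ≤ t - K - 1),
      mul_nonneg hB0 (by linarith : (0:ℝ) ≤ t - K - 1)]
  have hR0 : (0:ℝ) ≤ R := by linarith
  obtain ⟨p, hpball, hpmin⟩ := lsc_exists_min hφlsc (isCompact_closedBall x₀ R)
    ⟨x₀, Metric.mem_closedBall_self hR0⟩
  refine ⟨p, fun u => ?_⟩
  show φ p ≤ φ u
  rcases le_or_gt (‖u - x₀‖) R with h | h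
  · exact hpmin u (by simp only [Metric.mem_closedBall, dist_eq_norm]; exact h)
  · have h9 : ¬ (φ u ≤ φ x₀) := fun hc => absurd (hcoer u hc) (not_le.2 h)
    exact le_trans (hpmin x₀ (Metric.mem_closedBall_self hR0)) (not_le.1 h9).le

/-- **Gap between stochastic and deterministic updates.** With
`x̂ = prox^{Γ⁻¹}_g(x − Γ(d + w) − Γq)` and `x̄ = prox^{Γ⁻¹}_g(x − Γd − Γq)` one has
`‖ΣL(x̂ − x̄)‖² + ‖x̂ − x̄‖² ≤ ((1 + M(L*Σ²L)) / m(Γ⁻¹)) ‖w‖²_Γ`. -/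
theorem stochastic_deterministic_gap
    {H G : Type*} [NormedAddCommGroup H] [InnerProductSpace ℝ H] [FiniteDimensional ℝ H]
    [NormedAddCommGroup G] [InnerProductSpace ℝ G] [FiniteDimensional ℝ G]
    (g : H → EReal) (hproper : ERealProper g) (hconv : ERealConvexOn g)
    (hlsc : LowerSemicontinuous g)
    (L : H →ₗ[ℝ] G) (Ladj : G →ₗ[ℝ] H)
    (hadj : ∀ (x : H) (y : G), ⟪L x, y⟫ = ⟪x, Ladj y⟫)
    (Sg : G →ₗ[ℝ] G)
    (hSg_sa : ∀ y y' : G, ⟪Sg y, y'⟫ = ⟪y, Sg y'⟫)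
    (hSg_pd : ∀ y : G, y ≠ 0 → 0 < ⟪Sg y, y⟫)
    (Ga Gai : H →ₗ[ℝ] H)
    (hGa_sa : ∀ x y : H, ⟪Ga x, y⟫ = ⟪x, Ga y⟫)
    (hGa_pd : ∀ x : H, x ≠ 0 → 0 < ⟪Ga x, x⟫)
    (hGai_sa : ∀ x y : H, ⟪Gai x, y⟫ = ⟪x, Gai y⟫)
    (hGai_pd : ∀ x : H, x ≠ 0 → 0 < ⟪Gai x, x⟫)
    (hGai : ∀ x : H, Ga (Gai x) = x) (hGai' : ∀ x : H, Gai (Ga x) = x)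
    (MLS : ℝ)
    (hMLS : IsGreatest ((fun u : H => ⟪u, Ladj (Sg (Sg (L u)))⟫) '' {u | ‖u‖ = 1}) MLS)
    (mGai : ℝ)
    (hmGai : IsLeast ((fun u : H => ⟪u, Gai u⟫) '' {u | ‖u‖ = 1}) mGai)
    (x d q w : H) :
    ‖Sg (L (wprox Gai g (x - Ga (d + w) - Ga q) - wprox Gai g (x - Ga d - Ga q)))‖ ^ 2
        + ‖wprox Gai g (x - Ga (d + w) - Ga q) - wprox Gai g (x - Ga d - Ga q)‖ ^ 2
      ≤ (1 + MLS) / mGai * ⟪Ga w, w⟫ := by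
  -- positivity of mGai
  obtain ⟨u₀, hu₀s, hu₀v⟩ := hmGai.1
  have hu₀ne : u₀ ≠ 0 := by
    intro h
    rw [h] at hu₀s
    simp at hu₀s
  have hu₀v' : ⟪u₀, Gai u₀⟫ = mGai := hu₀v
  have hmpos : 0 < mGai := by
    rw [← hu₀v', real_inner_comm]
    exact hGai_pd u₀ hu₀ne
  -- pointwise lower eigenvalue bound for Gai
  have hQm : ∀ v : H, mGai * ‖v‖ ^ 2 ≤ ⟪Gai v, v⟫ := by
    intro v
    rcases eq_or_ne v 0 with rfl | hv
    · simp
    · have hnv : (0:ℝ) < ‖v‖ := norm_pos_iff.2 hv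
      set u : H := ‖v‖⁻¹ • v with hu
      have hun : ‖u‖ = 1 := by
        rw [hu, norm_smul, Real.norm_eq_abs, abs_of_pos (by positivity),
          inv_mul_cancel₀ (ne_of_gt hnv)]
      have hle : mGai ≤ ⟪u, Gai u⟫ := hmGai.2 ⟨u, hun, rfl⟩
      have hval : ⟪u, Gai u⟫ = ‖v‖⁻¹ * ‖v‖⁻¹ * ⟪v, Gai v⟫ := by
        rw [hu, map_smul, real_inner_smul_left, real_inner_smul_right]; ring
      rw [hval] at hle
      have := mul_le_mul_of_nonneg_left hle (by positivity : (0:ℝ) ≤ ‖v‖ ^ 2)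
      rw [real_inner_comm]
      calc mGai * ‖v‖ ^ 2 = ‖v‖ ^ 2 * mGai := by ring
        _ ≤ ‖v‖ ^ 2 * (‖v‖⁻¹ * ‖v‖⁻¹ * ⟪v, Gai v⟫) := this
        _ = (‖v‖ * ‖v‖⁻¹) * (‖v‖ * ‖v‖⁻¹) * ⟪v, Gai v⟫ := by ring
        _ = ⟪v, Gai v⟫ := by rw [mul_inv_cancel₀ (ne_of_gt hnv)]; ring
  have hQps : ∀ v : H, 0 ≤ ⟪Gai v, v⟫ := by
    intro v
    rcases eq_or_ne v 0 with rfl | hv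
    · simp
    · exact (hGai_pd v hv).le
  -- the two prox points exist
  set a : H := x - Ga (d + w) - Ga q with ha
  set b : H := x - Ga d - Ga q with hb
  obtain hea := exists_isWProx g hproper hconv hlsc Gai hmpos hQm a
  obtain heb := exists_isWProx g hproper hconv hlsc Gai hmpos hQm b
  set p : H := wprox Gai g a with hp
  set p' : H := wprox Gai g b with hp'
  have hpprox : IsWProx Gai g a p := Classical.epsilon_spec hea
  have hp'prox : IsWProx Gai g b p' := Classical.epsilon_spec heb
  -- firm nonexpansiveness
  have hfirm := isWProx_firm Gai hGai_sa hQps g hproper hconv hpprox hp'prox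
  have hab : a - b = -(Ga w) := by
    rw [ha, hb, map_add]; abel
  have hfirm' : ⟪Gai (p - p'), p - p'⟫ ≤ ⟪Ga w, w⟫ := by
    rw [hab] at hfirm
    rw [map_neg, inner_neg_neg, hGai'] at hfirm
    calc ⟪Gai (p - p'), p - p'⟫ ≤ ⟪w, Ga w⟫ := hfirm
      _ = ⟪Ga w, w⟫ := real_inner_comm _ _
  -- bound for the operator term
  have hMval : ∀ v : H, ⟪v, Ladj (Sg (Sg (L v)))⟫ = ‖Sg (L v)‖ ^ 2 := by
    intro v
    rw [← hadj, ← hSg_sa, real_inner_self_eq_norm_sq]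
  have hM0 : 0 ≤ MLS := by
    obtain ⟨u₁, hu₁s, hu₁v⟩ := hMLS.1
    have hu₁v' : ⟪u₁, Ladj (Sg (Sg (L u₁)))⟫ = MLS := hu₁v
    rw [← hu₁v', hMval]
    positivity
  have hMbound : ∀ v : H, ‖Sg (L v)‖ ^ 2 ≤ MLS * ‖v‖ ^ 2 := by
    intro v
    rcases eq_or_ne v 0 with rfl | hv
    · simp
    · have hnv : (0:ℝ) < ‖v‖ := norm_pos_iff.2 hv
      set u : H := ‖v‖⁻¹ • v with hu
      have hun : ‖u‖ = 1 := by
        rw [hu, norm_smul, Real.norm_eq_abs, abs_of_pos (by positivity),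
          inv_mul_cancel₀ (ne_of_gt hnv)]
      have hle : ⟪u, Ladj (Sg (Sg (L u)))⟫ ≤ MLS := hMLS.2 ⟨u, hun, rfl⟩
      rw [hMval] at hle
      have hsc : ‖Sg (L u)‖ ^ 2 = ‖v‖⁻¹ ^ 2 * ‖Sg (L v)‖ ^ 2 := by
        rw [hu, map_smul, map_smul, norm_smul, Real.norm_eq_abs,
          abs_of_pos (by positivity : (0:ℝ) < ‖v‖⁻¹)]
        ring
      rw [hsc] at hle
      have := mul_le_mul_of_nonneg_left hle (by positivity : (0:ℝ) ≤ ‖v‖ ^ 2)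
      calc ‖Sg (L v)‖ ^ 2 = ‖v‖ ^ 2 * (‖v‖⁻¹ ^ 2 * ‖Sg (L v)‖ ^ 2) := by
            field_simp
        _ ≤ ‖v‖ ^ 2 * MLS := this
        _ = MLS * ‖v‖ ^ 2 := by ring
  -- final assembly
  set D : H := p - p' with hD
  have h1 : ‖Sg (L D)‖ ^ 2 ≤ MLS * ‖D‖ ^ 2 := hMbound D
  have h2 : mGai * ‖D‖ ^ 2 ≤ ⟪Gai D, D⟫ := hQm D
  have h3 : ⟪Gai D, D⟫ ≤ ⟪Ga w, w⟫ := hfirm'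
  have hfrac : 0 ≤ (1 + MLS) / mGai := by positivity
  have h4 : (1 + MLS) / mGai * ⟪Gai D, D⟫ ≤ (1 + MLS) / mGai * ⟪Ga w, w⟫ :=
    mul_le_mul_of_nonneg_left h3 hfrac
  have h5 : (1 + MLS) * ‖D‖ ^ 2 ≤ (1 + MLS) / mGai * ⟪Gai D, D⟫ := by
    have h6 : (1 + MLS) / mGai * (mGai * ‖D‖ ^ 2) ≤ (1 + MLS) / mGai * ⟪Gai D, D⟫ :=
      mul_le_mul_of_nonneg_left h2 hfrac
    have h7 : (1 + MLS) / mGai * (mGai * ‖D‖ ^ 2) = (1 + MLS) * ‖D‖ ^ 2 := by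
      field_simp
    rw [h7] at h6
    exact h6
  show ‖Sg (L D)‖ ^ 2 + ‖D‖ ^ 2 ≤ _
  linarith [h1, h4, h5]
end

section
/- (Primal-dual pairs yield primal minimizers) Let H and G be finite-dimensional real inner product spaces, f: H → ℝ convex and continuously differentiable, g: H → (−∞,∞] and h: G → (−∞,∞] proper, convex and lower semicontinuous, and L: H → G linear with adjoint L*. If (ȳ, x̄) ∈ G × H satisfies Lx̄ ∈ ∂h*(ȳ) and −(∇f(x̄) + L*ȳ) ∈ ∂g(x̄), then x̄ is a global minimizer of the function x ↦ f(x) + g(x) + h(Lx) over H. -/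
open scoped RealInnerProductSpace

section PDauxSection
namespace PDaux
variable {G : Type*} [NormedAddCommGroup G] [InnerProductSpace ℝ G] [FiniteDimensional ℝ G]

/-- auxiliary: conjugate (same as econj). -/
noncomputable def econj {H : Type*} [NormedAddCommGroup H] [InnerProductSpace ℝ H]
    (f : H → EReal) (u : H) : EReal :=
  ⨆ x : H, ((⟪x, u⟫ : ℝ) : EReal) - f x

lemma convex_grad_ineq {H : Type*} [NormedAddCommGroup H] [InnerProductSpace ℝ H] [FiniteDimensional ℝ H]
    (f : H → ℝ) (hf : ConvexOn ℝ Set.univ f) (hsm : ContDiff ℝ 1 f) (x y : H) :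
    f x + ⟪gradient f x, y - x⟫ ≤ f y := by
  set v := y - x with hv
  have hd : DifferentiableAt ℝ f x := (hsm.differentiable one_ne_zero).differentiableAt
  have hg : HasFDerivAt f (InnerProductSpace.toDual ℝ H (gradient f x)) x :=
    hasGradientAt_iff_hasFDerivAt.mp hd.hasGradientAt
  have curve : HasDerivAt (fun t : ℝ => x + t • v) v 0 := by
    simpa using ((hasDerivAt_id (0:ℝ)).smul_const v).const_add x
  have hφ : HasDerivAt (fun t : ℝ => f (x + t • v)) ⟪gradient f x, v⟫ 0 := by
    have hg' : HasFDerivAt f (InnerProductSpace.toDual ℝ H (gradient f x)) (x + (0:ℝ) • v) := by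
      simpa using hg
    have := hg'.comp_hasDerivAt (0:ℝ) curve
    rw [InnerProductSpace.toDual_apply_apply] at this
    exact this
  have slope_le : ∀ t ∈ Set.Ioc (0:ℝ) 1, (f (x + t • v) - f x) / t ≤ f y - f x := by
    intro t ht
    have hconv := hf.2 (Set.mem_univ x) (Set.mem_univ y) (by linarith [ht.2] : (0:ℝ) ≤ 1 - t)
      (le_of_lt ht.1) (by ring)
    have hxy : (1 - t) • x + t • y = x + t • v := by
      rw [hv]; module
    rw [hxy] at hconv
    rw [div_le_iff₀ ht.1]
    simp only [smul_eq_mul] at hconv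
    nlinarith [hconv]
  have htends : Filter.Tendsto (fun t : ℝ => (f (x + t • v) - f x) / t)
      (nhdsWithin 0 (Set.Ioi 0)) (nhds ⟪gradient f x, v⟫) := by
    have h0 := hasDerivAt_iff_tendsto_slope.mp hφ
    have : Filter.Tendsto (slope (fun t : ℝ => f (x + t • v)) 0)
        (nhdsWithin 0 (Set.Ioi 0)) (nhds ⟪gradient f x, v⟫) :=
      h0.mono_left (nhdsWithin_mono 0 (fun t ht => ne_of_gt ht))
    refine this.congr' ?_
    filter_upwards [self_mem_nhdsWithin] with t ht
    simp [slope_def_field, div_eq_inv_mul]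
  have hle : ⟪gradient f x, v⟫ ≤ f y - f x := by
    refine le_of_tendsto htends ?_
    filter_upwards [Ioc_mem_nhdsGT_of_mem (by norm_num : (0:ℝ) ∈ Set.Ico (0:ℝ) 1)] with t ht
    exact slope_le t ht
  linarith


/-- The real epigraph of an `EReal`-valued function. -/
def repi (h : G → EReal) : Set (G × ℝ) := {p | h p.1 ≤ (p.2 : EReal)}

lemma repi_closed {h : G → EReal} (hlsc : LowerSemicontinuous h) : IsClosed (repi h) := by
  have h1 : IsClosed {p : G × EReal | h p.1 ≤ p.2} := hlsc.isClosed_epigraph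
  have h2 : Continuous (fun p : G × ℝ => ((p.1, (p.2 : EReal)) : G × EReal)) :=
    continuous_fst.prodMk (continuous_coe_real_ereal.comp continuous_snd)
  exact h1.preimage h2

lemma repi_convex {h : G → EReal}
    (hconv : ∀ x y : G, ∀ a b : ℝ, 0 ≤ a → 0 ≤ b → a + b = 1 →
      h (a • x + b • y) ≤ (a : EReal) * h x + (b : EReal) * h y)
    (hprop : ∀ x, h x ≠ ⊥) : Convex ℝ (repi h) := by
  rintro ⟨p1, p2⟩ hp ⟨q1, q2⟩ hq a b ha hb hab
  simp only [repi, Set.mem_setOf_eq] at hp hq ⊢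
  have hpt : h p1 ≠ ⊤ := fun ht => by simp [ht] at hp
  have hqt : h q1 ≠ ⊤ := fun ht => by simp [ht] at hq
  have hpe : ((h p1).toReal : EReal) = h p1 := EReal.coe_toReal hpt (hprop p1)
  have hqe : ((h q1).toReal : EReal) = h q1 := EReal.coe_toReal hqt (hprop q1)
  have hp' : (h p1).toReal ≤ p2 := by rw [← EReal.coe_le_coe_iff, hpe]; exact hp
  have hq' : (h q1).toReal ≤ q2 := by rw [← EReal.coe_le_coe_iff, hqe]; exact hq
  calc h (a • p1 + b • q1) ≤ (a : EReal) * h p1 + (b : EReal) * h q1 :=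
        hconv p1 q1 a b ha hb hab
    _ = ((a * (h p1).toReal + b * (h q1).toReal : ℝ) : EReal) := by
        rw [← hpe, ← hqe]; norm_cast
    _ ≤ (((a • (p1, p2) + b • (q1, q2) : G × ℝ)).2 : EReal) := by
        simp only [Prod.snd_add, Prod.smul_snd, smul_eq_mul]
        rw [EReal.coe_le_coe_iff]
        have h1 := mul_le_mul_of_nonneg_left hp' ha
        have h2 := mul_le_mul_of_nonneg_left hq' hb
        linarith

/-- Separation of a point from the epigraph. -/
lemma repi_sep {h : G → EReal}
    (hconv : ∀ x y : G, ∀ a b : ℝ, 0 ≤ a → 0 ≤ b → a + b = 1 →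
      h (a • x + b • y) ≤ (a : EReal) * h x + (b : EReal) * h y)
    (hprop : (∀ x, h x ≠ ⊥) ∧ ∃ x, h x ≠ ⊤)
    (hlsc : LowerSemicontinuous h) (p : G × ℝ) (hp : p ∉ repi h) :
    ∃ (a' : G) (s u : ℝ), s ≤ 0 ∧
      (∀ w : G, ∀ r : ℝ, h w ≤ (r : EReal) → ⟪a', w⟫ + r * s < u) ∧
      u < ⟪a', p.1⟫ + p.2 * s := by
  obtain ⟨φ, u, hlt, hx⟩ := geometric_hahn_banach_closed_point
    (repi_convex hconv hprop.1) (repi_closed hlsc) hp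
  set s : ℝ := φ (0, 1) with hs
  set a' : G := (InnerProductSpace.toDual ℝ G).symm (φ.comp (ContinuousLinearMap.inl ℝ G ℝ))
    with ha'
  have hrep : ∀ (w : G) (r : ℝ), φ (w, r) = ⟪a', w⟫ + r * s := by
    intro w r
    have hh1 : ⟪a', w⟫ = φ (w, 0) := by
      rw [ha', InnerProductSpace.toDual_symm_apply]; rfl
    have hh2 : ((w, r) : G × ℝ) = (w, (0:ℝ)) + r • ((0:G), (1:ℝ)) := by
      simp [Prod.ext_iff]
    rw [hh2, map_add, map_smul, hh1, hs]; simp [smul_eq_mul]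
  refine ⟨a', s, u, ?_, ?_, ?_⟩
  · -- s ≤ 0
    by_contra hspos
    push_neg at hspos
    obtain ⟨x₀, hx₀⟩ := hprop.2
    obtain ⟨n, hn⟩ := exists_nat_gt ((u - ⟪a', x₀⟫ - (h x₀).toReal * s) / s)
    have hmem : ((x₀, (h x₀).toReal + n) : G × ℝ) ∈ repi h := by
      show h x₀ ≤ (((h x₀).toReal + n : ℝ) : EReal)
      refine (EReal.le_coe_toReal hx₀).trans ?_
      rw [EReal.coe_le_coe_iff]
      have : (0:ℝ) ≤ n := Nat.cast_nonneg n
      linarith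
    have := hlt _ hmem
    rw [hrep] at this
    rw [div_lt_iff₀ hspos] at hn
    nlinarith
  · intro w r hwr
    have hmem : ((w, r) : G × ℝ) ∈ repi h := hwr
    have := hlt _ hmem
    rwa [hrep] at this
  · have := hx
    have hpp : φ p = ⟪a', p.1⟫ + p.2 * s := by rw [← hrep]
    rwa [hpp] at this

/-- Existence of an affine minorant. -/
lemma affine_minorant {h : G → EReal}
    (hconv : ∀ x y : G, ∀ a b : ℝ, 0 ≤ a → 0 ≤ b → a + b = 1 →
      h (a • x + b • y) ≤ (a : EReal) * h x + (b : EReal) * h y)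
    (hprop : (∀ x, h x ≠ ⊥) ∧ ∃ x, h x ≠ ⊤)
    (hlsc : LowerSemicontinuous h) :
    ∃ (a : G) (b : ℝ), ∀ w : G, ((⟪w, a⟫ - b : ℝ) : EReal) ≤ h w := by
  obtain ⟨x₀, hx₀⟩ := hprop.2
  set t₀ : ℝ := (h x₀).toReal with ht₀
  have hx₀mem : h x₀ ≤ (t₀ : EReal) := EReal.le_coe_toReal hx₀
  have hpnot : ((x₀, t₀ - 1) : G × ℝ) ∉ repi h := by
    intro hmem
    have h2 : ((t₀ : ℝ) : EReal) ≤ ((t₀ - 1 : ℝ) : EReal) := by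
      rw [EReal.coe_toReal hx₀ (hprop.1 x₀)]; exact hmem
    rw [EReal.coe_le_coe_iff] at h2; linarith
  obtain ⟨a', s, u, hs0, hlt, hgt⟩ := repi_sep hconv hprop hlsc _ hpnot
  have hsneg : s < 0 := by
    rcases lt_or_eq_of_le hs0 with h' | h'
    · exact h'
    · exfalso
      have h1 := hlt x₀ t₀ hx₀mem
      simp only at hgt
      rw [h'] at h1 hgt
      simp only [mul_zero, add_zero] at h1 hgt
      linarith
  refine ⟨(-s⁻¹) • a', -(u / s), ?_⟩
  intro w
  rcases eq_or_ne (h w) ⊤ with hw | hw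
  · rw [hw]; exact le_top
  have hwr : h w ≤ (((h w).toReal : ℝ) : EReal) := EReal.le_coe_toReal hw
  have h1 := hlt w (h w).toReal hwr
  have hinner : ⟪w, (-s⁻¹) • a'⟫ = -s⁻¹ * ⟪a', w⟫ := by
    rw [real_inner_comm, real_inner_smul_left]
  rw [← EReal.coe_toReal hw (hprop.1 w), EReal.coe_le_coe_iff, hinner]
  have hdiv : (u - ⟪a', w⟫) / s ≤ (h w).toReal := by
    rw [div_le_iff_of_neg hsneg]
    nlinarith [h1]
  have heq : -s⁻¹ * ⟪a', w⟫ - -(u / s) = (u - ⟪a', w⟫) / s := by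
    field_simp
    ring
  linarith [hdiv, heq.le, heq.ge]

lemma econj_ne_bot {h : G → EReal} (hprop : (∀ x, h x ≠ ⊥) ∧ ∃ x, h x ≠ ⊤) (a : G) :
    PDaux.econj h a ≠ ⊥ := by
  obtain ⟨x₀, hx₀⟩ := hprop.2
  have h1 : ((⟪x₀, a⟫ : ℝ) : EReal) - h x₀ ≤ PDaux.econj h a := by unfold PDaux.econj; exact le_iSup (fun x : G => ((⟪x, a⟫ : ℝ) : EReal) - h x) x₀
  have h2 : ((⟪x₀, a⟫ - (h x₀).toReal : ℝ) : EReal) ≤ ((⟪x₀, a⟫ : ℝ) : EReal) - h x₀ := by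
    rw [EReal.coe_sub]
    exact EReal.sub_le_sub le_rfl (EReal.le_coe_toReal hx₀)
  exact ((EReal.bot_lt_coe _).trans_le (h2.trans h1)).ne'

lemma econj_le_of_minorant {h : G → EReal} {a : G} {c : ℝ}
    (hm : ∀ w : G, ((⟪w, a⟫ - c : ℝ) : EReal) ≤ h w) : PDaux.econj h a ≤ (c : EReal) := by
  refine iSup_le fun w => ?_
  calc ((⟪w, a⟫ : ℝ) : EReal) - h w
      ≤ ((⟪w, a⟫ : ℝ) : EReal) - ((⟪w, a⟫ - c : ℝ) : EReal) :=
        EReal.sub_le_sub le_rfl (hm w)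
    _ = (c : EReal) := by rw [← EReal.coe_sub]; norm_cast; ring

lemma econj_young {h : G → EReal} (hprop : (∀ x, h x ≠ ⊥) ∧ ∃ x, h x ≠ ⊤) (w a : G) :
    ((⟪w, a⟫ : ℝ) : EReal) - PDaux.econj h a ≤ h w := by
  have h1 : ((⟪w, a⟫ : ℝ) : EReal) - h w ≤ PDaux.econj h a := by unfold PDaux.econj; exact le_iSup (fun x : G => ((⟪x, a⟫ : ℝ) : EReal) - h x) w
  rw [EReal.sub_le_iff_le_add (Or.inl (econj_ne_bot hprop a)) (Or.inr (hprop.1 w))]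
  rcases eq_or_ne (h w) ⊤ with hw | hw
  · rw [hw, EReal.top_add_of_ne_bot (econj_ne_bot hprop a)]; exact le_top
  · have hwe : ((h w).toReal : EReal) = h w := EReal.coe_toReal hw (hprop.1 w)
    calc ((⟪w, a⟫ : ℝ) : EReal) = ((h w).toReal : EReal) + ((⟪w, a⟫ - (h w).toReal : ℝ) : EReal) := by
          norm_cast; ring
      _ ≤ h w + PDaux.econj h a := by
          rw [hwe]
          refine add_le_add le_rfl ?_
          refine le_trans ?_ h1
          rw [EReal.coe_sub, hwe]
    
lemma minorant_of_sep {h : G → EReal} (hprop1 : ∀ x, h x ≠ ⊥) {a' : G} {s u : ℝ}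
    (hlt : ∀ w : G, ∀ r : ℝ, h w ≤ (r : EReal) → ⟪a', w⟫ + r * s < u) (hsneg : s < 0) :
    ∀ w : G, ((⟪w, (-s⁻¹) • a'⟫ - (-(u / s)) : ℝ) : EReal) ≤ h w := by
  intro w
  rcases eq_or_ne (h w) ⊤ with hw | hw
  · rw [hw]; exact le_top
  have hwr : h w ≤ (((h w).toReal : ℝ) : EReal) := EReal.le_coe_toReal hw
  have h1 := hlt w (h w).toReal hwr
  have hinner : ⟪w, (-s⁻¹) • a'⟫ = -s⁻¹ * ⟪a', w⟫ := by
    rw [real_inner_comm, real_inner_smul_left]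
  rw [← EReal.coe_toReal hw (hprop1 w), EReal.coe_le_coe_iff, hinner]
  have hdiv : (u - ⟪a', w⟫) / s ≤ (h w).toReal := by
    rw [div_le_iff_of_neg hsneg]
    nlinarith [h1]
  have heq : -s⁻¹ * ⟪a', w⟫ - -(u / s) = (u - ⟪a', w⟫) / s := by
    field_simp
    ring
  linarith [hdiv, heq.le, heq.ge]

lemma fm_point {h : G → EReal}
    (hconv : ∀ x y : G, ∀ a b : ℝ, 0 ≤ a → 0 ≤ b → a + b = 1 →
      h (a • x + b • y) ≤ (a : EReal) * h x + (b : EReal) * h y)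
    (hprop : (∀ x, h x ≠ ⊥) ∧ ∃ x, h x ≠ ⊤)
    (hlsc : LowerSemicontinuous h) (z : G) (t : ℝ) (hz : (t : EReal) < h z) :
    ∃ a : G, (t : EReal) < ((⟪z, a⟫ : ℝ) : EReal) - PDaux.econj h a := by
  have hpnot : ((z, t) : G × ℝ) ∉ repi h := fun hm => absurd hm (not_le.mpr hz)
  obtain ⟨a', s, u, hs0, hlt, hgt⟩ := repi_sep hconv hprop hlsc (z, t) hpnot
  simp only at hgt
  rcases lt_or_eq_of_le hs0 with hsneg | hs0'
  · -- non-vertical separation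
    set a : G := (-s⁻¹) • a' with ha
    set c : ℝ := -(u / s) with hc
    have hm := minorant_of_sep hprop.1 hlt hsneg
    have hcle : PDaux.econj h a ≤ (c : EReal) := econj_le_of_minorant hm
    have hinner : ⟪z, a⟫ = -s⁻¹ * ⟪a', z⟫ := by
      rw [ha, real_inner_comm, real_inner_smul_left]
    have treal : t < ⟪z, a⟫ - c := by
      have hdiv : t < (u - ⟪a', z⟫) / s := by
        rw [lt_div_iff_of_neg hsneg]
        nlinarith [hgt]
      have heq : ⟪z, a⟫ - c = (u - ⟪a', z⟫) / s := by
        rw [hinner, hc]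
        field_simp
        ring
      rw [heq]
      exact hdiv
    refine ⟨a, ?_⟩
    calc (t : EReal) < ((⟪z, a⟫ - c : ℝ) : EReal) := by exact_mod_cast treal
      _ ≤ ((⟪z, a⟫ : ℝ) : EReal) - PDaux.econj h a := by
          rw [EReal.coe_sub]
          exact EReal.sub_le_sub le_rfl hcle
  · -- vertical separation: combine with an affine minorant
    subst hs0'
    simp only [mul_zero, add_zero] at hlt hgt
    obtain ⟨a₀, b₀, hm₀⟩ := affine_minorant hconv hprop hlsc
    have hd : (0:ℝ) < ⟪a', z⟫ - u := by linarith [hgt]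
    set k : ℝ := max 1 ((t - ⟪z, a₀⟫ + b₀ + 1) / (⟪a', z⟫ - u)) with hk
    have hk1 : (1:ℝ) ≤ k := le_max_left _ _
    have hk0 : (0:ℝ) ≤ k := by linarith
    have hkd : t - ⟪z, a₀⟫ + b₀ + 1 ≤ k * (⟪a', z⟫ - u) := by
      rw [← div_le_iff₀ hd]
      exact le_max_right _ _
    set a : G := a₀ + k • a' with ha
    set c : ℝ := b₀ + k * u with hc
    have hm : ∀ w : G, ((⟪w, a⟫ - c : ℝ) : EReal) ≤ h w := by
      intro w
      rcases eq_or_ne (h w) ⊤ with hw | hw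
      · rw [hw]; exact le_top
      have hwr : h w ≤ (((h w).toReal : ℝ) : EReal) := EReal.le_coe_toReal hw
      have h1 := hlt w (h w).toReal hwr
      have h2 : ⟪w, a₀⟫ - b₀ ≤ (h w).toReal := by
        have := hm₀ w
        rw [← EReal.coe_toReal hw (hprop.1 w), EReal.coe_le_coe_iff] at this
        exact this
      have hinner : ⟪w, a⟫ = ⟪w, a₀⟫ + k * ⟪a', w⟫ := by
        rw [ha, inner_add_right, real_inner_smul_right, real_inner_comm w a']
      rw [← EReal.coe_toReal hw (hprop.1 w), EReal.coe_le_coe_iff, hinner, hc]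
      nlinarith [mul_le_mul_of_nonneg_left (le_of_lt h1) hk0]
    have hcle : PDaux.econj h a ≤ (c : EReal) := econj_le_of_minorant hm
    have hinner : ⟪z, a⟫ = ⟪z, a₀⟫ + k * ⟪a', z⟫ := by
      rw [ha, inner_add_right, real_inner_smul_right, real_inner_comm z a']
    have treal : t < ⟪z, a⟫ - c := by
      rw [hinner, hc]
      nlinarith [hkd]
    refine ⟨a, ?_⟩
    calc (t : EReal) < ((⟪z, a⟫ - c : ℝ) : EReal) := by exact_mod_cast treal
      _ ≤ ((⟪z, a⟫ : ℝ) : EReal) - PDaux.econj h a := by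
          rw [EReal.coe_sub]
          exact EReal.sub_le_sub le_rfl hcle


lemma econj_eq (h : G → EReal) : _root_.econj h = PDaux.econj h := rfl

end PDaux
end PDauxSection

/-- **Primal-dual pairs yield primal minimizers.** If `Lx̄ ∈ ∂h*(ȳ)` and
`−(∇f(x̄) + L*ȳ) ∈ ∂g(x̄)`, then `x̄` minimizes `x ↦ f(x) + g(x) + h(Lx)` over `H`. -/
theorem primal_dual_pair_minimizer
    {H G : Type*} [NormedAddCommGroup H] [InnerProductSpace ℝ H] [FiniteDimensional ℝ H]
    [NormedAddCommGroup G] [InnerProductSpace ℝ G] [FiniteDimensional ℝ G]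
    (f : H → ℝ) (hf_cvx : ConvexOn ℝ Set.univ f) (hf_smooth : ContDiff ℝ 1 f)
    (g : H → EReal) (hg_proper : ERealProper g) (hg_conv : ERealConvexOn g)
    (hg_lsc : LowerSemicontinuous g)
    (h : G → EReal) (hh_proper : ERealProper h) (hh_conv : ERealConvexOn h)
    (hh_lsc : LowerSemicontinuous h)
    (L : H →ₗ[ℝ] G) (Ladj : G →ₗ[ℝ] H)
    (hadj : ∀ (x : H) (y : G), ⟪L x, y⟫ = ⟪x, Ladj y⟫)
    (yb : G) (xb : H)
    (h1 : L xb ∈ ESubdiff (econj h) yb)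
    (h2 : -(gradient f xb + Ladj yb) ∈ ESubdiff g xb) :
    ∀ x : H, (f xb : EReal) + g xb + h (L xb) ≤ (f x : EReal) + g x + h (L x) := by
  intro x
  have hh_conv' : ∀ x y : G, ∀ a b : ℝ, 0 ≤ a → 0 ≤ b → a + b = 1 →
      h (a • x + b • y) ≤ (a : EReal) * h x + (b : EReal) * h y := hh_conv
  have hh_prop' : (∀ x, h x ≠ ⊥) ∧ ∃ x, h x ≠ ⊤ := hh_proper
  have h1' : ∀ u : G, econj h yb + ((⟪L xb, u - yb⟫ : ℝ) : EReal) ≤ econj h u := h1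
  have h2' : ∀ u : H, g xb + ((⟪-(gradient f xb + Ladj yb), u - xb⟫ : ℝ) : EReal) ≤ g u := h2
  -- `g xb` is real
  obtain ⟨x₁, hx₁⟩ := hg_proper.2
  have hgb_ne_top : g xb ≠ ⊤ := by
    intro htop
    have hco := h2' x₁
    rw [htop, EReal.top_add_coe] at hco
    exact hx₁ (top_le_iff.mp hco)
  set p : ℝ := (g xb).toReal with hp
  have hgp : (p : EReal) = g xb := EReal.coe_toReal hgb_ne_top (hg_proper.1 xb)
  -- `econj h yb` is real
  have hcb : econj h yb ≠ ⊥ := PDaux.econj_ne_bot hh_prop' yb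
  obtain ⟨a₀, b₀, hm₀⟩ := PDaux.affine_minorant hh_conv' hh_prop' hh_lsc
  have hct : econj h yb ≠ ⊤ := by
    intro htop
    have hco := h1' a₀
    rw [htop, EReal.top_add_coe] at hco
    have hb₀ : econj h a₀ ≤ (b₀ : EReal) := PDaux.econj_le_of_minorant hm₀
    exact (EReal.coe_ne_top b₀) (top_le_iff.mp (le_trans hco hb₀))
  set c : ℝ := (econj h yb).toReal with hcdef
  have hcc : (c : EReal) = econj h yb := EReal.coe_toReal hct hcb
  -- key inequality `h (L xb) ≤ ⟪L xb, yb⟫ - c`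
  have hkey : h (L xb) ≤ ((⟪L xb, yb⟫ - c : ℝ) : EReal) := by
    by_contra hcon
    push_neg at hcon
    obtain ⟨a, hA⟩ := PDaux.fm_point hh_conv' hh_prop' hh_lsc (L xb) (⟪L xb, yb⟫ - c) hcon
    have hB := h1' a
    rw [← hcc] at hB
    have hB' : ((c + ⟪L xb, a - yb⟫ : ℝ) : EReal) ≤ econj h a := by
      rw [EReal.coe_add]; exact hB
    have hsub : ((⟪L xb, a⟫ : ℝ) : EReal) - econj h a
        ≤ ((⟪L xb, a⟫ - (c + ⟪L xb, a - yb⟫) : ℝ) : EReal) := by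
      rw [EReal.coe_sub]; exact EReal.sub_le_sub le_rfl hB'
    have heq : ⟪L xb, a⟫ - (c + ⟪L xb, a - yb⟫) = ⟪L xb, yb⟫ - c := by
      rw [inner_sub_right]; ring
    rw [heq] at hsub
    exact absurd (lt_of_lt_of_le hA hsub) (lt_irrefl _)
  -- `h (L xb)` is real
  have hhb_ne_top : h (L xb) ≠ ⊤ := by
    intro ht
    rw [ht] at hkey
    exact (EReal.coe_ne_top _) (top_le_iff.mp hkey)
  set q : ℝ := (h (L xb)).toReal with hqdef
  have hq : (q : EReal) = h (L xb) := EReal.coe_toReal hhb_ne_top (hh_proper.1 (L xb))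
  have hq_le : q ≤ ⟪L xb, yb⟫ - c := by
    rw [← EReal.coe_le_coe_iff, hq]; exact hkey
  -- Young's inequality at `L x`
  have hyoung : ((⟪L x, yb⟫ - c : ℝ) : EReal) ≤ h (L x) := by
    have hy := PDaux.econj_young hh_prop' (L x) yb
    rw [← PDaux.econj_eq h, ← hcc, ← EReal.coe_sub] at hy
    exact hy
  -- gradient inequality for f
  have hf_ineq : f xb + ⟪gradient f xb, x - xb⟫ ≤ f x :=
    PDaux.convex_grad_ineq f hf_cvx hf_smooth xb x
  -- subgradient inequality for g at x
  have hg_ineq : ((p + ⟪-(gradient f xb + Ladj yb), x - xb⟫ : ℝ) : EReal) ≤ g x := by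
    rw [EReal.coe_add, hgp]
    exact h2' x
  -- adjoint computation
  have hadj' : ⟪L x, yb⟫ - ⟪L xb, yb⟫ = ⟪x - xb, Ladj yb⟫ := by
    rw [← hadj, map_sub, inner_sub_left]
  have hinner2 : ⟪-(gradient f xb + Ladj yb), x - xb⟫
      = -⟪gradient f xb, x - xb⟫ - ⟪x - xb, Ladj yb⟫ := by
    rw [inner_neg_left, inner_add_left, real_inner_comm (x - xb) (Ladj yb)]; ring
  have hreal : f xb + p + q
      ≤ f x + (p + ⟪-(gradient f xb + Ladj yb), x - xb⟫) + (⟪L x, yb⟫ - c) := by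
    rw [hinner2]
    linarith [hf_ineq, hq_le, hadj']
  calc (f xb : EReal) + g xb + h (L xb) = ((f xb + p + q : ℝ) : EReal) := by
        rw [← hgp, ← hq]; norm_cast
    _ ≤ ((f x + (p + ⟪-(gradient f xb + Ladj yb), x - xb⟫) + (⟪L x, yb⟫ - c) : ℝ) : EReal) :=
        EReal.coe_le_coe_iff.mpr hreal
    _ = (f x : EReal) + ((p + ⟪-(gradient f xb + Ladj yb), x - xb⟫ : ℝ) : EReal)
        + ((⟪L x, yb⟫ - c : ℝ) : EReal) := by norm_cast
    _ ≤ (f x : EReal) + g x + h (L x) := add_le_add (add_le_add le_rfl hg_ineq) hyoung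
end
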